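/- arXiv:1106.4982 — 6 statements merged into one kernel-verified Lean document; each statement's English description precedes it below -/
import Mathlib

section
/- Let n ≥ 3 and let B_n be the Artin braid group on n strands. Then Γ_2(B_n) = Γ_3(B_n). -/
/-!
Distant generators of `B_n` commute, and adjacent ones are conjugate: the braid relation
`σᵢ σⱼ σᵢ = σⱼ σᵢ σⱼ` says `σⱼ = (σᵢ σⱼ) σᵢ (σᵢ σⱼ)⁻¹`. Modulo `Γ₃` conjugate elements commute,
since `c a c⁻¹ = a ⁅a⁻¹, c⁆` with `⁅a⁻¹, c⁆ ∈ Γ₂`. So `B_n ⧸ Γ₃` is generated by pairwise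
commuting elements, hence abelian, which is `Γ₂ ≤ Γ₃`.
-/

/-- Relators of the Artin braid group `B_n` on `n` strands: generators
`σ_1, …, σ_{n-1}` are indexed by `Fin (n-1)` (the generator of index `i`
being `σ_{i+1}`). -/
def braidRels (n : ℕ) : Set (FreeGroup (Fin (n - 1))) :=
  {r | ∃ i j : Fin (n - 1), (i : ℕ) + 2 ≤ (j : ℕ) ∧
      r = .of i * .of j * (.of j * .of i)⁻¹} ∪
  {r | ∃ i j : Fin (n - 1), (i : ℕ) + 1 = (j : ℕ) ∧
      r = .of i * .of j * .of i * (.of j * .of i * .of j)⁻¹}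

/-- The Artin braid group on `n` strands, as a presented group. -/
abbrev BraidGroup (n : ℕ) := PresentedGroup (braidRels n)

open scoped commutatorElement

theorem isConj_of_mul_mul_eq {G : Type*} [Group G] {a b : G} (h : a * b * a = b * a * b) :
    IsConj a b :=
  isConj_iff.mpr ⟨a * b, by rw [h]; group⟩

namespace Subgroup

variable {G : Type*} [Group G]

theorem commutator_le_of_forall_commutatorElement_mem {s : Set G} (hs : closure s = ⊤)
    {N : Subgroup G} [N.Normal] (h : ∀ x ∈ s, ∀ y ∈ s, ⁅x, y⁆ ∈ N) : _root_.commutator G ≤ N := by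
  rw [← Normal.quotient_commutative_iff_commutator_le, isMulCommutative_iff]
  set t : Set (G ⧸ N) := QuotientGroup.mk' N '' s
  have ht : closure t = ⊤ := by
    rw [← MonoidHom.map_closure (QuotientGroup.mk' N), hs, ← MonoidHom.range_eq_map,
      MonoidHom.range_eq_top]
    exact QuotientGroup.mk'_surjective N
  have hcomm : ∀ a ∈ t, ∀ b ∈ t, a * b = b * a := by
    rintro _ ⟨x, hx, rfl⟩ _ ⟨y, hy, rfl⟩
    rw [← commutatorElement_eq_one_iff_mul_comm]
    exact (QuotientGroup.eq_one_iff _).mpr (h x hx y hy)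
  intro a b
  have hmem : ∀ c : G ⧸ N, c ∈ closure t := fun c ↦ ht ▸ mem_top c
  exact Set.centralizer_centralizer_comm_of_comm hcomm
    a (closure_le_centralizer_centralizer t (hmem a))
    b (closure_le_centralizer_centralizer t (hmem b))

theorem commutatorElement_conj_mem_lowerCentralSeries_two (a c : G) :
    ⁅a, c * a * c⁻¹⁆ ∈ (⊤ : Subgroup G).lowerCentralSeries 2 := by
  have hk : ⁅a⁻¹, c⁆ ∈ (⊤ : Subgroup G).lowerCentralSeries 1 :=
    commutator_mem_commutator (mem_top a⁻¹) (mem_top c)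
  have hconj : ⁅a, c * a * c⁻¹⁆ = a * ⁅⁅a⁻¹, c⁆, a⁆⁻¹ * a⁻¹ := by
    simp only [commutatorElement_def]; group
  rw [hconj]
  exact Normal.conj_mem inferInstance _
    (inv_mem (commutator_mem_commutator hk (mem_top a))) a

theorem lowerCentralSeries_one_eq_two_of_commute_or_isConj {s : Set G} (hs : closure s = ⊤)
    (h : ∀ x ∈ s, ∀ y ∈ s, Commute x y ∨ IsConj x y) :
    (⊤ : Subgroup G).lowerCentralSeries 1 = (⊤ : Subgroup G).lowerCentralSeries 2 := by
  refine le_antisymm ?_ (lowerCentralSeries_antitone _ (by norm_num))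
  rw [top_lowerCentralSeries_one]
  refine commutator_le_of_forall_commutatorElement_mem hs fun x hx y hy ↦ ?_
  rcases h x hx y hy with hxy | hxy
  · rw [commutatorElement_eq_one_iff_commute.mpr hxy]
    exact one_mem _
  · obtain ⟨c, rfl⟩ := isConj_iff.mp hxy
    exact commutatorElement_conj_mem_lowerCentralSeries_two x c

end Subgroup

namespace BraidGroup

variable {n : ℕ}

local notation "σ" => (PresentedGroup.of : Fin (n - 1) → BraidGroup n)

theorem of_mul_of_eq_of_mul_of {i j : Fin (n - 1)} (h : (i : ℕ) + 2 ≤ j) :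
    σ i * σ j = σ j * σ i :=
  mul_inv_eq_one.mp (PresentedGroup.one_of_mem (Or.inl ⟨i, j, h, rfl⟩))

theorem of_mul_of_mul_of_eq {i j : Fin (n - 1)} (h : (i : ℕ) + 1 = j) :
    σ i * σ j * σ i = σ j * σ i * σ j :=
  mul_inv_eq_one.mp (PresentedGroup.one_of_mem (Or.inr ⟨i, j, h, rfl⟩))

theorem commute_or_isConj_of (i j : Fin (n - 1)) :
    Commute (σ i) (σ j) ∨ IsConj (σ i) (σ j) := by
  wlog hij : (i : ℕ) ≤ j generalizing i j
  · exact (this j i (by omega)).imp Commute.symm IsConj.symm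
  obtain h | h | h : (i : ℕ) = j ∨ (i : ℕ) + 1 = j ∨ (i : ℕ) + 2 ≤ j := by omega
  · exact .inl (Fin.ext h ▸ Commute.refl _)
  · exact .inr (isConj_of_mul_mul_eq (of_mul_of_mul_of_eq h))
  · exact .inl (of_mul_of_eq_of_mul_of h)

end BraidGroup

theorem stmt2_general (n : ℕ) :
    Subgroup.lowerCentralSeries (⊤ : Subgroup (BraidGroup n)) 1 =
      Subgroup.lowerCentralSeries (⊤ : Subgroup (BraidGroup n)) 2 :=
  Subgroup.lowerCentralSeries_one_eq_two_of_commute_or_isConj (PresentedGroup.closure_range_of _)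
    (by rintro _ ⟨i, rfl⟩ _ ⟨j, rfl⟩; exact BraidGroup.commute_or_isConj_of i j)

theorem stmt2 (n : ℕ) (hn : 3 ≤ n) :
    Subgroup.lowerCentralSeries (⊤ : Subgroup (BraidGroup n)) 1 =
      Subgroup.lowerCentralSeries (⊤ : Subgroup (BraidGroup n)) 2 :=
  stmt2_general n
end

section
/- Let g ≥ 1 and n ≥ 3. Then the quotient Γ_2(B_n(Σ_g))/Γ_3(B_n(Σ_g)) is isomorphic to ℤ. -/
/-- Generators of the braid group `B_n(Σ_g)` of the compact orientable genus-`g`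
surface with one boundary component: `a i`, `b i` for `i : Fin g` (the generators
`a_{i+1}, b_{i+1}`) and `s j` for `j : Fin (n-1)` (the generator `σ_{j+1}`). -/
inductive SurfGen (g n : ℕ) : Type
  | a : Fin g → SurfGen g n
  | b : Fin g → SurfGen g n
  | s : Fin (n - 1) → SurfGen g n

namespace SurfGen

variable {g n : ℕ}

/-- `c false i = a_i` and `c true i = b_i`. -/
def c (t : Bool) (i : Fin g) : SurfGen g n := if t then .b i else .a i

end SurfGen

/-- Relators of the braid group `B_n(Σ_g)` of the compact orientable genus-`g`
surface with one boundary component (generator `σ_1` is `s ⟨0, h⟩`). -/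
def surfBraidRels (g n : ℕ) : Set (FreeGroup (SurfGen g n)) :=
  -- σ_i σ_j = σ_j σ_i for |i-j| ≥ 2
  {r | ∃ i j : Fin (n - 1), (i : ℕ) + 2 ≤ (j : ℕ) ∧
      r = .of (.s i) * .of (.s j) * (.of (.s j) * .of (.s i))⁻¹} ∪
  -- σ_i σ_{i+1} σ_i = σ_{i+1} σ_i σ_{i+1}
  {r | ∃ i j : Fin (n - 1), (i : ℕ) + 1 = (j : ℕ) ∧
      r = .of (.s i) * .of (.s j) * .of (.s i) *
        (.of (.s j) * .of (.s i) * .of (.s j))⁻¹} ∪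
  -- c_i σ_j = σ_j c_i for j ≥ 2
  {r | ∃ (t : Bool) (i : Fin g) (j : Fin (n - 1)), 1 ≤ (j : ℕ) ∧
      r = .of (.c t i) * .of (.s j) * (.of (.s j) * .of (.c t i))⁻¹} ∪
  -- c_i σ_1 c_i σ_1 = σ_1 c_i σ_1 c_i
  {r | ∃ (t : Bool) (i : Fin g) (h : 0 < n - 1),
      r = .of (.c t i) * .of (.s ⟨0, h⟩) * .of (.c t i) * .of (.s ⟨0, h⟩) *
        (.of (.s ⟨0, h⟩) * .of (.c t i) * .of (.s ⟨0, h⟩) * .of (.c t i))⁻¹} ∪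
  -- a_i σ_1 b_i = σ_1 b_i σ_1 a_i σ_1
  {r | ∃ (i : Fin g) (h : 0 < n - 1),
      r = .of (.a i) * .of (.s ⟨0, h⟩) * .of (.b i) *
        (.of (.s ⟨0, h⟩) * .of (.b i) * .of (.s ⟨0, h⟩) * .of (.a i) * .of (.s ⟨0, h⟩))⁻¹} ∪
  -- c_i σ_1⁻¹ c_j σ_1 = σ_1⁻¹ c_j σ_1 c_i for j < i
  {r | ∃ (t t' : Bool) (i j : Fin g) (h : 0 < n - 1), (j : ℕ) < (i : ℕ) ∧
      r = .of (.c t i) * (.of (.s ⟨0, h⟩))⁻¹ * .of (.c t' j) * .of (.s ⟨0, h⟩) *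
        ((.of (.s ⟨0, h⟩))⁻¹ * .of (.c t' j) * .of (.s ⟨0, h⟩) * .of (.c t i))⁻¹}

/-- The braid group `B_n(Σ_g)` of the compact orientable genus-`g` surface with
one boundary component, as a presented group. -/
abbrev SurfBraidGroup (g n : ℕ) := PresentedGroup (surfBraidRels g n)

/-!
In `G ⧸ Γ₃` commutators are central, so the commutator map is bimultiplicative and a braid
relation `uvu = vuv` forces `u = v`. Hence all `σ_j` have the same image `σ`, which (through
`σ₂`, available since `n ≥ 3`) commutes with every `a_i`, `b_i`; the mixed relations then make
generators with different indices commute, and `a_i σ₁ b_i = σ₁ b_i σ₁ a_i σ₁` becomes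
`⁅a_i, b_i⁆ = σ²`. So `Γ₂ ⧸ Γ₃` is cyclic, generated by the class of `⁅a_1, b_1⁆`.

Conversely `a_i ↦ (2 e_i, 0, 0)`, `b_i ↦ (0, e_i, 0)`, `σ_j ↦ (0, 0, 1)` defines a homomorphism
to the integral Heisenberg group. That group has class two and its central coordinate is additive
on the commutator subgroup, so it induces a homomorphism `Γ₂ ⧸ Γ₃ → ℤ` sending the class of
`⁅a_1, b_1⁆` to `2`; hence that class has infinite order.
-/

open scoped commutatorElement

section GroupLemmas

variable {G : Type*} [Group G]

theorem commutatorElement_mul_right_of_forall_mem_center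
    (hG : ∀ x y : G, ⁅x, y⁆ ∈ Subgroup.center G) (x y z : G) :
    ⁅x, y * z⁆ = ⁅x, y⁆ * ⁅x, z⁆ := by
  rw [commutatorElement_mul_right_eq_mul_conj, mul_assoc _ y,
    Subgroup.mem_center_iff.mp (hG x z) y, ← mul_assoc _ _ y, mul_inv_cancel_right]

theorem commutatorElement_inv_right_of_forall_mem_center
    (hG : ∀ x y : G, ⁅x, y⁆ ∈ Subgroup.center G) (x y : G) :
    ⁅x, y⁻¹⁆ = ⁅x, y⁆⁻¹ := by
  rw [commutatorElement_inv_right, Subgroup.mem_center_iff.mp (hG y x) y⁻¹,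
    inv_mul_cancel_right, commutatorElement_inv]

theorem commutatorElement_mul_left_of_forall_mem_center
    (hG : ∀ x y : G, ⁅x, y⁆ ∈ Subgroup.center G) (x y z : G) :
    ⁅x * y, z⁆ = ⁅x, z⁆ * ⁅y, z⁆ := by
  rw [← commutatorElement_inv, commutatorElement_mul_right_of_forall_mem_center hG, mul_inv_rev,
    commutatorElement_inv, commutatorElement_inv, Subgroup.mem_center_iff.mp (hG x z)]

theorem commutatorElement_inv_left_of_forall_mem_center
    (hG : ∀ x y : G, ⁅x, y⁆ ∈ Subgroup.center G) (x y : G) :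
    ⁅x⁻¹, y⁆ = ⁅x, y⁆⁻¹ := by
  rw [← commutatorElement_inv, commutatorElement_inv_right_of_forall_mem_center hG,
    commutatorElement_inv]

theorem commutatorElement_mem_of_mem_closure (hG : ∀ x y : G, ⁅x, y⁆ ∈ Subgroup.center G)
    {S : Set G} {K : Subgroup G} (hS : ∀ s ∈ S, ∀ t ∈ S, ⁅s, t⁆ ∈ K) {x y : G}
    (hx : x ∈ Subgroup.closure S) (hy : y ∈ Subgroup.closure S) : ⁅x, y⁆ ∈ K := by
  induction hx, hy using Subgroup.closure_induction₂ with
  | mem s t hs ht => exact hS s hs t ht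
  | one_left => simp
  | one_right => simp
  | mul_left x y z _ _ _ hx hy =>
    rw [commutatorElement_mul_left_of_forall_mem_center hG]; exact mul_mem hx hy
  | mul_right y z x _ _ _ hy hz =>
    rw [commutatorElement_mul_right_of_forall_mem_center hG]; exact mul_mem hy hz
  | inv_left x y _ _ h => rw [commutatorElement_inv_left_of_forall_mem_center hG]; exact inv_mem h
  | inv_right x y _ _ h => rw [commutatorElement_inv_right_of_forall_mem_center hG]; exact inv_mem h

theorem eq_of_braid_of_forall_mem_center (hG : ∀ x y : G, ⁅x, y⁆ ∈ Subgroup.center G)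
    {u v : G} (h : u * v * u = v * u * v) : u = v := by
  have huv : u * v = ⁅u, v⁆ * (v * u) := by rw [commutatorElement_def]; group
  have hlhs : u * v * u = ⁅u, v⁆ * (v * (u * u)) := by rw [huv]; group
  have hrhs : v * u * v = ⁅u, v⁆ * (v * (v * u)) := by
    rw [mul_assoc, huv, ← mul_assoc, Subgroup.mem_center_iff.mp (hG u v) v, mul_assoc]
  rw [hlhs, hrhs] at h
  exact mul_right_cancel (mul_left_cancel (mul_left_cancel h))

theorem commutatorElement_mem_center_quotient_lowerCentralSeries_two
    (x y : G ⧸ (⊤ : Subgroup G).lowerCentralSeries 2) :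
    ⁅x, y⁆ ∈ Subgroup.center (G ⧸ (⊤ : Subgroup G).lowerCentralSeries 2) := by
  induction x using QuotientGroup.induction_on with | H x => ?_
  induction y using QuotientGroup.induction_on with | H y => ?_
  refine Subgroup.mem_center_iff.mpr fun z => ?_
  induction z using QuotientGroup.induction_on with | H z => ?_
  rw [eq_comm, ← commutatorElement_eq_one_iff_mul_comm]
  exact (QuotientGroup.eq_one_iff ⁅⁅x, y⁆, z⁆).mpr <| Subgroup.commutator_mem_commutator
    (Subgroup.commutator_mem_commutator (Subgroup.mem_top x) (Subgroup.mem_top y))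
    (Subgroup.mem_top z)

theorem Subgroup.map_mem_top_lowerCentralSeries {K : Type*} [Group K] (f : G →* K) {k : ℕ}
    {x : G} (hx : x ∈ (⊤ : Subgroup G).lowerCentralSeries k) :
    f x ∈ (⊤ : Subgroup K).lowerCentralSeries k := by
  refine Subgroup.lowerCentralSeries_mono k (le_top (a := (⊤ : Subgroup G).map f)) ?_
  show f x ∈ ((⊤ : Subgroup G).map f).lowerCentralSeries k
  rw [← Subgroup.map_lowerCentralSeries]
  exact Subgroup.mem_map_of_mem f hx

theorem QuotientGroup.zpowers_mk_subgroupOf_eq_top {H K : Subgroup G} [K.Normal] (t : H)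
    (h : ∀ x ∈ H, (x : G ⧸ K) ∈ Subgroup.zpowers ((t : G) : G ⧸ K)) :
    Subgroup.zpowers (t : H ⧸ K.subgroupOf H) = ⊤ := by
  refine eq_top_iff.mpr fun q _ => ?_
  induction q using QuotientGroup.induction_on with | H x => ?_
  obtain ⟨k, hk⟩ := Subgroup.mem_zpowers_iff.mp (h x x.2)
  refine Subgroup.mem_zpowers_iff.mpr ⟨k, ?_⟩
  rw [← QuotientGroup.mk_zpow, QuotientGroup.eq, Subgroup.mem_subgroupOf]
  push_cast
  rw [← QuotientGroup.eq, QuotientGroup.mk_zpow, hk]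

theorem nonempty_mulEquiv_multiplicative_int {Q H : Type*} [Group Q] [Group H]
    [IsMulTorsionFree H] {q : Q} (hq : Subgroup.zpowers q = ⊤) (χ : Q →* H) (hχ : χ q ≠ 1) :
    Nonempty (Q ≃* Multiplicative ℤ) := by
  have hq_inf : ¬IsOfFinOrder q := fun hfin =>
    hχ ((isOfFinOrder_iff_eq_one _).mp (χ.isOfFinOrder hfin))
  have : Infinite Q := Set.infinite_univ_iff.mp (by simpa [hq] using infinite_zpowers.mpr hq_inf)
  exact ⟨(intEquivOfZPowersEqTop q hq).symm⟩

end GroupLemmas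

@[ext]
structure Heisenberg (R ι : Type*) where
  p : ι → R
  q : ι → R
  z : R

namespace Heisenberg

variable {R ι : Type*} [CommRing R]

instance : One (Heisenberg R ι) := ⟨⟨0, 0, 0⟩⟩

@[simp] lemma one_p : (1 : Heisenberg R ι).p = 0 := rfl
@[simp] lemma one_q : (1 : Heisenberg R ι).q = 0 := rfl
@[simp] lemma one_z : (1 : Heisenberg R ι).z = 0 := rfl

variable [Fintype ι]

instance : Mul (Heisenberg R ι) := ⟨fun x y => ⟨x.p + y.p, x.q + y.q, x.z + y.z + x.p ⬝ᵥ y.q⟩⟩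
instance : Inv (Heisenberg R ι) := ⟨fun x => ⟨-x.p, -x.q, -x.z + x.p ⬝ᵥ x.q⟩⟩

@[simp] lemma mul_p (x y : Heisenberg R ι) : (x * y).p = x.p + y.p := rfl
@[simp] lemma mul_q (x y : Heisenberg R ι) : (x * y).q = x.q + y.q := rfl
@[simp] lemma mul_z (x y : Heisenberg R ι) : (x * y).z = x.z + y.z + x.p ⬝ᵥ y.q := rfl
@[simp] lemma inv_p (x : Heisenberg R ι) : x⁻¹.p = -x.p := rfl
@[simp] lemma inv_q (x : Heisenberg R ι) : x⁻¹.q = -x.q := rfl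
@[simp] lemma inv_z (x : Heisenberg R ι) : x⁻¹.z = -x.z + x.p ⬝ᵥ x.q := rfl

instance : Group (Heisenberg R ι) where
  mul_assoc x y w := by ext <;> simp [add_dotProduct, dotProduct_add] <;> ring
  one_mul x := by ext <;> simp
  mul_one x := by ext <;> simp
  inv_mul_cancel x := by ext <;> simp [neg_dotProduct]

lemma commutatorElement_eq (x y : Heisenberg R ι) :
    ⁅x, y⁆ = ⟨0, 0, x.p ⬝ᵥ y.q - y.p ⬝ᵥ x.q⟩ := by
  ext
  · simp [commutatorElement_def]
  · simp [commutatorElement_def]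
  · simp [commutatorElement_def, add_dotProduct, dotProduct_neg]
    ring

variable (R ι) in
def zAxis : Subgroup (Heisenberg R ι) where
  carrier := {x | x.p = 0 ∧ x.q = 0}
  one_mem' := ⟨rfl, rfl⟩
  mul_mem' := by rintro x y ⟨hxp, hxq⟩ ⟨hyp, hyq⟩; simp [hxp, hxq, hyp, hyq]
  inv_mem' := by rintro x ⟨hxp, hxq⟩; simp [hxp, hxq]

lemma commutator_le_zAxis : commutator (Heisenberg R ι) ≤ zAxis R ι :=
  Subgroup.commutator_le.mpr fun x _ y _ => by simp [commutatorElement_eq, zAxis]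

lemma zAxis_le_center : zAxis R ι ≤ Subgroup.center (Heisenberg R ι) := by
  rintro x ⟨hxp, hxq⟩
  refine Subgroup.mem_center_iff.mpr fun y => ?_
  ext <;> simp [hxp, hxq, add_comm]

lemma lowerCentralSeries_two_eq_bot : (⊤ : Subgroup (Heisenberg R ι)).lowerCentralSeries 2 = ⊥ :=
  Subgroup.lowerCentralSeries_succ_eq_bot _ (commutator_le_zAxis.trans zAxis_le_center)

def zAxisHom : zAxis R ι →* Multiplicative R where
  toFun x := .ofAdd (x : Heisenberg R ι).z
  map_one' := rfl
  map_mul' := by rintro ⟨x, hxp, -⟩ ⟨y, -, -⟩; simp [hxp]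

variable {G : Type*} [Group G]

def lowerCentralQuotientZ (φ : G →* Heisenberg R ι) :
    ↥((⊤ : Subgroup G).lowerCentralSeries 1) ⧸
      ((⊤ : Subgroup G).lowerCentralSeries 2).subgroupOf ((⊤ : Subgroup G).lowerCentralSeries 1)
      →* Multiplicative R :=
  QuotientGroup.lift _
    (zAxisHom.comp ((φ.domRestrict ((⊤ : Subgroup G).lowerCentralSeries 1)).codRestrict (zAxis R ι)
      fun x => commutator_le_zAxis (Subgroup.map_mem_top_lowerCentralSeries φ x.2)))
    fun x hx => by
      have h := Subgroup.map_mem_top_lowerCentralSeries φ (Subgroup.mem_subgroupOf.mp hx)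
      rw [lowerCentralSeries_two_eq_bot, Subgroup.mem_bot] at h
      rw [MonoidHom.mem_ker]
      show Multiplicative.ofAdd (φ x).z = 1
      rw [h]
      rfl

lemma lowerCentralQuotientZ_mk (φ : G →* Heisenberg R ι)
    (x : (⊤ : Subgroup G).lowerCentralSeries 1) :
    lowerCentralQuotientZ φ x = .ofAdd (φ x).z :=
  rfl

end Heisenberg

theorem SurfGen.eq_c_or_eq_s {g n : ℕ} (x : SurfGen g n) :
    (∃ t i, x = .c t i) ∨ ∃ j, x = .s j := by
  rcases x with i | i | j
  exacts [.inl ⟨false, i, rfl⟩, .inl ⟨true, i, rfl⟩, .inr ⟨j, rfl⟩]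

namespace SurfBraidGroup

open PresentedGroup (of)

variable {g n : ℕ}

theorem of_s_braid (i j : Fin (n - 1)) (hij : (i : ℕ) + 1 = j) :
    (of (.s i) * of (.s j) * of (.s i) : SurfBraidGroup g n) = of (.s j) * of (.s i) * of (.s j) :=
  PresentedGroup.mk_eq_mk_of_mul_inv_mem (.inl (.inl (.inl (.inl (.inr ⟨i, j, hij, rfl⟩)))))

theorem commute_of_c_of_s (t : Bool) (i : Fin g) (j : Fin (n - 1)) (hj : 1 ≤ (j : ℕ)) :
    Commute (of (.c t i) : SurfBraidGroup g n) (of (.s j)) :=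
  PresentedGroup.mk_eq_mk_of_mul_inv_mem (.inl (.inl (.inl (.inr ⟨t, i, j, hj, rfl⟩))))

theorem of_a_mul_of_s_mul_of_b (i : Fin g) (h : 0 < n - 1) :
    (of (.a i) * of (.s ⟨0, h⟩) * of (.b i) : SurfBraidGroup g n) =
      of (.s ⟨0, h⟩) * of (.b i) * of (.s ⟨0, h⟩) * of (.a i) * of (.s ⟨0, h⟩) :=
  PresentedGroup.mk_eq_mk_of_mul_inv_mem (.inl (.inr ⟨i, h, rfl⟩))

theorem commute_of_c_conj_of_c (t t' : Bool) (i j : Fin g) (h : 0 < n - 1) (hji : (j : ℕ) < i) :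
    Commute (of (.c t i) : SurfBraidGroup g n)
      ((of (.s ⟨0, h⟩))⁻¹ * of (.c t' j) * of (.s ⟨0, h⟩)) := by
  have hrel : (of (.c t i) * (of (.s ⟨0, h⟩))⁻¹ * of (.c t' j) * of (.s ⟨0, h⟩) :
      SurfBraidGroup g n) = (of (.s ⟨0, h⟩))⁻¹ * of (.c t' j) * of (.s ⟨0, h⟩) * of (.c t i) :=
    PresentedGroup.mk_eq_mk_of_mul_inv_mem (.inr ⟨t, t', i, j, h, hji, rfl⟩)
  simpa only [Commute, SemiconjBy, mul_assoc] using hrel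

variable {H : Type*} [Group H]

theorem map_of_s_eq (hH : ∀ x y : H, ⁅x, y⁆ ∈ Subgroup.center H) (f : SurfBraidGroup g n →* H)
    (j j' : Fin (n - 1)) : f (of (.s j)) = f (of (.s j')) := by
  have h : ∀ (m : ℕ) (hm : m < n - 1), f (of (.s ⟨m, hm⟩)) = f (of (.s ⟨0, by omega⟩)) := by
    intro m
    induction m with
    | zero => intro; rfl
    | succ m ih =>
      intro hm
      have hbraid := congrArg f (of_s_braid ⟨m, by omega⟩ ⟨m + 1, hm⟩ rfl)
      simp only [map_mul] at hbraid
      exact (eq_of_braid_of_forall_mem_center hH hbraid).symm.trans (ih _)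
  rw [h j j.2, h j' j'.2]

theorem commute_map_of_map_of_s (hH : ∀ x y : H, ⁅x, y⁆ ∈ Subgroup.center H)
    (f : SurfBraidGroup g n →* H) (hn : 3 ≤ n) (x : SurfGen g n) (j : Fin (n - 1)) :
    Commute (f (of x)) (f (of (.s j))) := by
  rw [map_of_s_eq hH f j ⟨1, by omega⟩]
  rcases x with i | i | j'
  · exact (commute_of_c_of_s false i _ le_rfl).map f
  · exact (commute_of_c_of_s true i _ le_rfl).map f
  · rw [map_of_s_eq hH f j' ⟨1, by omega⟩]

theorem commute_map_of_c_map_of_c (hH : ∀ x y : H, ⁅x, y⁆ ∈ Subgroup.center H)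
    (f : SurfBraidGroup g n →* H) (hn : 3 ≤ n) (t t' : Bool) {i j : Fin g} (hij : i ≠ j) :
    Commute (f (of (.c t i))) (f (of (.c t' j))) := by
  wlog hji : j < i generalizing t t' i j
  · exact (this t' t hij.symm (lt_of_le_of_ne (not_lt.mp hji) hij)).symm
  have hconj := (commute_of_c_conj_of_c t t' i j (by omega) hji).map f
  rwa [map_mul, map_mul, map_inv,
    (commute_map_of_map_of_s hH f hn (.c t' j) ⟨0, by omega⟩).symm.inv_mul_cancel] at hconj

theorem commutatorElement_map_of_a_map_of_b (hH : ∀ x y : H, ⁅x, y⁆ ∈ Subgroup.center H)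
    (f : SurfBraidGroup g n →* H) (hn : 3 ≤ n) (i : Fin g) (j : Fin (n - 1)) :
    ⁅f (of (.a i)), f (of (.b i))⁆ = f (of (.s j)) ^ 2 := by
  have hrel := congrArg f (of_a_mul_of_s_mul_of_b i (by omega : 0 < n - 1))
  have hA := commute_map_of_map_of_s hH f hn (.a i) ⟨0, by omega⟩
  have hB := commute_map_of_map_of_s hH f hn (.b i) ⟨0, by omega⟩
  simp only [map_mul, mul_assoc, hA.eq, hA.left_comm, hB.left_comm] at hrel
  rw [map_of_s_eq hH f j ⟨0, by omega⟩, commutatorElement_def, mul_inv_eq_iff_eq_mul,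
    mul_inv_eq_iff_eq_mul, pow_two]
  simpa only [mul_assoc] using mul_left_cancel hrel

theorem commutatorElement_map_of_map_of_mem_zpowers
    (hH : ∀ x y : H, ⁅x, y⁆ ∈ Subgroup.center H) (f : SurfBraidGroup g n →* H) (hn : 3 ≤ n)
    (j : Fin (n - 1)) (x y : SurfGen g n) :
    ⁅f (of x), f (of y)⁆ ∈ Subgroup.zpowers (f (of (.s j)) ^ 2) := by
  have hs (x : SurfGen g n) (j' : Fin (n - 1)) :
      ⁅f (of x), f (of (.s j'))⁆ ∈ Subgroup.zpowers (f (of (.s j)) ^ 2) := by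
    rw [commutatorElement_eq_one_iff_commute.mpr (commute_map_of_map_of_s hH f hn x j')]
    exact one_mem _
  obtain ⟨t, i, rfl⟩ | ⟨j₁, rfl⟩ := x.eq_c_or_eq_s <;>
    obtain ⟨t', i', rfl⟩ | ⟨j₂, rfl⟩ := y.eq_c_or_eq_s
  · obtain rfl | hii' := eq_or_ne i i'
    · rcases t with _ | _ <;> rcases t' with _ | _
      · simp
      · exact commutatorElement_map_of_a_map_of_b hH f hn i j ▸ Subgroup.mem_zpowers _
      · rw [← commutatorElement_inv]
        exact commutatorElement_map_of_a_map_of_b hH f hn i j ▸ inv_mem (Subgroup.mem_zpowers _)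
      · simp
    · rw [commutatorElement_eq_one_iff_commute.mpr
        (commute_map_of_c_map_of_c hH f hn t t' hii')]
      exact one_mem _
  · exact hs _ _
  · rw [← commutatorElement_inv]
    exact inv_mem (hs _ _)
  · exact hs _ _

theorem map_mem_zpowers_of_mem_commutator (hH : ∀ x y : H, ⁅x, y⁆ ∈ Subgroup.center H)
    (f : SurfBraidGroup g n →* H) (hn : 3 ≤ n) (j : Fin (n - 1)) {x : SurfBraidGroup g n}
    (hx : x ∈ commutator (SurfBraidGroup g n)) :
    f x ∈ Subgroup.zpowers (f (of (.s j)) ^ 2) := by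
  have hgen (y : SurfBraidGroup g n) : f y ∈ Subgroup.closure (Set.range (f ∘ of)) := by
    rw [Set.range_comp, ← MonoidHom.map_closure, PresentedGroup.closure_range_of]
    exact Subgroup.mem_map_of_mem f (Subgroup.mem_top y)
  suffices commutator _ ≤ (Subgroup.zpowers (f (of (.s j)) ^ 2)).comap f from this hx
  refine Subgroup.commutator_le.mpr fun y _ z _ => ?_
  rw [Subgroup.mem_comap, map_commutatorElement]
  refine commutatorElement_mem_of_mem_closure hH ?_ (hgen y) (hgen z)
  rintro _ ⟨x, rfl⟩ _ ⟨y, rfl⟩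
  exact commutatorElement_map_of_map_of_mem_zpowers hH f hn j x y

def heisenbergGen : SurfGen g n → Heisenberg ℤ (Fin g)
  | .a i => ⟨Pi.single i 2, 0, 0⟩
  | .b i => ⟨0, Pi.single i 1, 0⟩
  | .s _ => ⟨0, 0, 1⟩

theorem lift_heisenbergGen_eq_one :
    ∀ r ∈ surfBraidRels g n, FreeGroup.lift heisenbergGen r = 1 := by
  rintro r (((((⟨i, j, -, rfl⟩ | ⟨i, j, -, rfl⟩) | ⟨_ | _, i, j, -, rfl⟩) | ⟨_ | _, i, -, rfl⟩) |
    ⟨i, -, rfl⟩) | ⟨_ | _, _ | _, i, j, -, hji, rfl⟩)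
  all_goals ext <;> simp [heisenbergGen, SurfGen.c, Pi.single_apply, ← Fin.val_inj] <;> omega

def toHeisenberg : SurfBraidGroup g n →* Heisenberg ℤ (Fin g) :=
  PresentedGroup.toGroup lift_heisenbergGen_eq_one

def commutatorAB (i : Fin g) : (⊤ : Subgroup (SurfBraidGroup g n)).lowerCentralSeries 1 :=
  ⟨⁅of (.a i), of (.b i)⁆,
    Subgroup.commutator_mem_commutator (Subgroup.mem_top _) (Subgroup.mem_top _)⟩

theorem coe_commutatorAB (i : Fin g) :
    (commutatorAB (n := n) i : SurfBraidGroup g n) =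
      ⁅(of (.a i) : SurfBraidGroup g n), of (.b i)⁆ :=
  rfl

theorem zpowers_mk_commutatorAB_eq_top (hn : 3 ≤ n) (i : Fin g) :
    Subgroup.zpowers (QuotientGroup.mk (commutatorAB i) :
      ↥((⊤ : Subgroup (SurfBraidGroup g n)).lowerCentralSeries 1) ⧸
        ((⊤ : Subgroup (SurfBraidGroup g n)).lowerCentralSeries 2).subgroupOf
          ((⊤ : Subgroup (SurfBraidGroup g n)).lowerCentralSeries 1)) = ⊤ := by
  refine QuotientGroup.zpowers_mk_subgroupOf_eq_top _ fun x hx => ?_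
  let π := QuotientGroup.mk' ((⊤ : Subgroup (SurfBraidGroup g n)).lowerCentralSeries 2)
  have hπ := commutatorElement_mem_center_quotient_lowerCentralSeries_two (G := SurfBraidGroup g n)
  let j : Fin (n - 1) := ⟨0, by omega⟩
  have ht : π (commutatorAB (n := n) i) = π (of (.s j)) ^ 2 := by
    rw [coe_commutatorAB, map_commutatorElement]
    exact commutatorElement_map_of_a_map_of_b hπ π hn i j
  show π x ∈ Subgroup.zpowers (π (commutatorAB (n := n) i))
  rw [ht]
  exact map_mem_zpowers_of_mem_commutator hπ π hn j hx

theorem lowerCentralQuotientZ_toHeisenberg_commutatorAB (i : Fin g) :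
    Heisenberg.lowerCentralQuotientZ toHeisenberg (QuotientGroup.mk (commutatorAB (n := n) i)) =
      .ofAdd 2 := by
  rw [Heisenberg.lowerCentralQuotientZ_mk]
  simp [coe_commutatorAB, map_commutatorElement, toHeisenberg, Heisenberg.commutatorElement_eq,
    heisenbergGen]

end SurfBraidGroup

theorem stmt4 (g n : ℕ) (hg : 1 ≤ g) (hn : 3 ≤ n) :
    Nonempty ((↥(Subgroup.lowerCentralSeries (⊤ : Subgroup (SurfBraidGroup g n)) 1) ⧸
      (Subgroup.lowerCentralSeries (⊤ : Subgroup (SurfBraidGroup g n)) 2).subgroupOf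
        (Subgroup.lowerCentralSeries (⊤ : Subgroup (SurfBraidGroup g n)) 1)) ≃* Multiplicative ℤ) := by
  let i : Fin g := ⟨0, hg⟩
  refine nonempty_mulEquiv_multiplicative_int (SurfBraidGroup.zpowers_mk_commutatorAB_eq_top hn i)
    (Heisenberg.lowerCentralQuotientZ SurfBraidGroup.toHeisenberg) ?_
  rw [SurfBraidGroup.lowerCentralQuotientZ_toHeisenberg_commutatorAB]
  simp
end

section
/- Let g ≥ 1 and n ≥ 3. Then B_n(Σ_g) is not residually nilpotent; equivalently, the intersection ⋂_{i ≥ 1} Γ_i(B_n(Σ_g)) is not the trivial subgroup. -/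
/-!
If `x y x = y x y` in a group, then `t = y x⁻¹` is conjugate to the commutator `⁅t⁻¹, x⁆`, so by
induction `t` lies in every term of the lower central series. In `B_n(Σ_g)` with `n ≥ 3` the
generators `σ_1, σ_2` satisfy the braid relation, and they are distinct because the permutation
representation `σ_j ↦ (j, j+1)`, `a_i, b_i ↦ 1` separates them.
-/

open scoped commutatorElement

section BraidRelation

variable {G : Type*} [Group G] {x y : G}

theorem mul_inv_eq_conj_commutator_of_braid (h : x * y * x = y * x * y) :
    y * x⁻¹ = (x * x)⁻¹ * ⁅(y * x⁻¹)⁻¹, x⁆ * (x * x) := by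
  rw [show (x * x)⁻¹ * ⁅(y * x⁻¹)⁻¹, x⁆ * (x * x) = x⁻¹ * y⁻¹ * (x * y * x) * x⁻¹ by
    rw [commutatorElement_def]; group, h]
  group

theorem mul_inv_mem_lowerCentralSeries_of_braid (h : x * y * x = y * x * y) (k : ℕ) :
    y * x⁻¹ ∈ (⊤ : Subgroup G).lowerCentralSeries k := by
  induction k with
  | zero => exact Subgroup.mem_top _
  | succ k ih =>
    rw [mul_inv_eq_conj_commutator_of_braid h]
    exact Subgroup.Normal.conj_mem' inferInstance _
      (Subgroup.commutator_mem_commutator (inv_mem ih) (Subgroup.mem_top x)) _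

theorem iInf_lowerCentralSeries_ne_bot_of_braid (h : x * y * x = y * x * y) (hxy : x ≠ y) :
    ⨅ i : ℕ, (⊤ : Subgroup G).lowerCentralSeries i ≠ ⊥ := by
  intro hbot
  have hmem := Subgroup.mem_iInf.mpr (mul_inv_mem_lowerCentralSeries_of_braid h)
  rw [hbot, Subgroup.mem_bot, mul_inv_eq_one] at hmem
  exact hxy hmem.symm

end BraidRelation

theorem Equiv.swap_braid {α : Type*} [DecidableEq α] {a b c : α} (hab : a ≠ b)
    (hac : a ≠ c) (hbc : b ≠ c) :
    swap a b * swap b c * swap a b = swap b c * swap a b * swap b c := by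
  have lhs := swap_apply_apply (swap a b) b c
  have rhs := swap_apply_apply (swap b c) a b
  rw [swap_apply_right, swap_apply_of_ne_of_ne hac.symm hbc.symm, swap_inv] at lhs
  rw [swap_apply_left, swap_apply_of_ne_of_ne hab hac, swap_inv] at rhs
  rw [← lhs, rhs]

namespace SurfBraidGroup

variable {g n : ℕ}

def σ (j : Fin (n - 1)) : SurfBraidGroup g n := PresentedGroup.of (SurfGen.s j)

theorem σ_braid {i j : Fin (n - 1)} (hij : (i : ℕ) + 1 = j) :
    (σ i * σ j * σ i : SurfBraidGroup g n) = σ j * σ i * σ j := by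
  have hmem : FreeGroup.of (SurfGen.s i) * .of (.s j) * .of (.s i) *
      (.of (.s j) * .of (.s i) * .of (.s j))⁻¹ ∈ surfBraidRels g n :=
    .inl <| .inl <| .inl <| .inl <| .inr ⟨i, j, hij, rfl⟩
  have h := PresentedGroup.mk_eq_mk_of_mul_inv_mem hmem
  simp only [map_mul] at h
  exact h

def genPerm : SurfGen g n → Equiv.Perm (Fin n)
  | .a _ => 1
  | .b _ => 1
  | .s j => Equiv.swap ⟨j, by omega⟩ ⟨j + 1, by omega⟩

theorem genPerm_c (t : Bool) (i : Fin g) : genPerm (SurfGen.c t i : SurfGen g n) = 1 := by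
  cases t <;> rfl

theorem genPerm_s (j : Fin (n - 1)) :
    genPerm (SurfGen.s j : SurfGen g n) = Equiv.swap ⟨j, by omega⟩ ⟨j + 1, by omega⟩ := rfl

theorem genPerm_rels : ∀ r ∈ surfBraidRels g n, FreeGroup.lift genPerm r = 1 := by
  rintro r (((((⟨i, j, hij, rfl⟩ | ⟨i, j, hij, rfl⟩) | ⟨t, i, j, -, rfl⟩) | ⟨t, i, -, rfl⟩) |
      ⟨i, -, rfl⟩) | ⟨t, t', i, j, -, -, rfl⟩) <;>
    simp only [map_mul, map_inv, FreeGroup.lift_apply_of, genPerm.eq_1, genPerm.eq_2, genPerm_s,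
      genPerm_c, one_mul, mul_one, mul_inv_eq_one]
  · refine (Equiv.Perm.Disjoint.commute (Equiv.Perm.disjoint_swap_swap ?_)).eq
    simp only [List.nodup_cons, List.mem_cons, List.not_mem_nil, List.nodup_nil, Fin.ext_iff,
      or_false, not_false_eq_true, and_true]
    omega
  · obtain ⟨j, hj⟩ := j
    subst hij
    exact Equiv.swap_braid (by simp) (by simp [Fin.ext_iff]; omega) (by simp)
  -- `a_i, b_i` act trivially, so `a_i σ_1 b_i = σ_1 b_i σ_1 a_i σ_1` becomes `σ_1 = σ_1³`
  · rw [mul_assoc, Equiv.swap_mul_self, mul_one]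

def toPerm : SurfBraidGroup g n →* Equiv.Perm (Fin n) := PresentedGroup.toGroup genPerm_rels

theorem σ_injective : Function.Injective (σ : Fin (n - 1) → SurfBraidGroup g n) := by
  intro i j hij
  have h := congr(toPerm $hij ⟨i, by omega⟩)
  simp only [toPerm, σ, PresentedGroup.toGroup.of, genPerm_s, Equiv.swap_apply_left,
    Equiv.swap_apply_def, Fin.ext_iff] at h
  ext
  split_ifs at h <;> simp only at h <;> omega

end SurfBraidGroup

theorem stmt6_general (g n : ℕ) (hn : 3 ≤ n) :
    (⨅ i : ℕ, (⊤ : Subgroup (SurfBraidGroup g n)).lowerCentralSeries i) ≠ ⊥ :=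
  iInf_lowerCentralSeries_ne_bot_of_braid
    (SurfBraidGroup.σ_braid (i := ⟨0, by omega⟩) (j := ⟨1, by omega⟩) rfl)
    (SurfBraidGroup.σ_injective.ne (by simp))

theorem stmt6 (g n : ℕ) (hg : 1 ≤ g) (hn : 3 ≤ n) :
    (⨅ i : ℕ, (⊤ : Subgroup (SurfBraidGroup g n)).lowerCentralSeries i) ≠ ⊥ :=
  stmt6_general g n hn
end

section
/- Let g ≥ 1 and n ≥ 3. Then the quotient B_n(Σ_g)/Γ_3(B_n(Σ_g)) is isomorphic to G_g, via an isomorphism sending the class of each σ_i (1 ≤ i ≤ n−1) to σ and the classes of a_i and b_i to a_i and b_i respectively. -/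
/-- Generators of the group `G_g`: `a i`, `b i` for `i : Fin g`, and `s` (= σ). -/
inductive GGGen (g : ℕ) : Type
  | a : Fin g → GGGen g
  | b : Fin g → GGGen g
  | s : GGGen g

/-- Relators of `G_g`: the generators commute pairwise except the pairs
`(a_i, b_i)`, and `[a_i, b_i] = σ²`. -/
def GgRels (g : ℕ) : Set (FreeGroup (GGGen g)) :=
  {r | ∃ x y : GGGen g, (∀ i : Fin g, ¬((x = .a i ∧ y = .b i) ∨ (x = .b i ∧ y = .a i))) ∧
      r = .of x * .of y * (.of x)⁻¹ * (.of y)⁻¹} ∪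
  {r | ∃ i : Fin g,
      r = .of (.a i) * .of (.b i) * (.of (.a i))⁻¹ * (.of (.b i))⁻¹ * ((.of .s) ^ 2)⁻¹}

/-- The group `G_g`, as a presented group. -/
abbrev GGroup (g : ℕ) := PresentedGroup (GgRels g)

/-!
In `Q = B_n(Σ_g)/Γ_3` all commutators are central, and for such groups the braid relation
`xyx = yxy` forces `x = y`; hence all `σ_i` have the same image `σ`. Since `n ≥ 3`, `σ = σ_2`
commutes with every `a_i, b_i`, and the remaining surface relations then say exactly that
generators with different indices commute and `[a_i, b_i] = σ²`, as in `G_g`. Conversely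
`G_g` is nilpotent of class `2` (`σ` is central and all commutators of generators are powers of
`σ`), so `B_n(Σ_g) → G_g` factors through `Q`, and the two maps are mutually inverse on generators.
-/

open scoped commutatorElement

namespace Subgroup

variable {G : Type*} [Group G]

theorem lowerCentralSeries_two_eq_bot_of_closure {S : Set G} (hS : closure S = ⊤)
    (hSZ : ∀ x ∈ S, ∀ y ∈ S, ⁅x, y⁆ ∈ center G) :
    (⊤ : Subgroup G).lowerCentralSeries 2 = ⊥ := by
  refine lowerCentralSeries_succ_eq_bot ⊤ ?_
  let π := QuotientGroup.mk' (center G)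
  have hcomm : ∀ x ∈ π '' S, ∀ y ∈ π '' S, x * y = y * x := by
    rintro _ ⟨x, hx, rfl⟩ _ ⟨y, hy, rfl⟩
    rw [← commutatorElement_eq_one_iff_mul_comm, ← map_commutatorElement,
      QuotientGroup.mk'_apply, QuotientGroup.eq_one_iff]
    exact hSZ x hx y hy
  have hcentralizer := closure_le_centralizer_centralizer (π '' S)
  rw [← MonoidHom.map_closure, hS, map_top_of_surjective _ (QuotientGroup.mk'_surjective _)]
    at hcentralizer
  rw [top_lowerCentralSeries_one, _root_.commutator_def, commutator_le]
  intro x _ y _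
  rw [← QuotientGroup.eq_one_iff, ← QuotientGroup.mk'_apply, map_commutatorElement,
    commutatorElement_eq_one_iff_mul_comm]
  exact Set.centralizer_centralizer_comm_of_comm hcomm _ (hcentralizer (mem_top _)) _
    (hcentralizer (mem_top _))

theorem lowerCentralSeries_le_ker {H : Type*} [Group H] (f : G →* H) {k : ℕ}
    (hH : (⊤ : Subgroup H).lowerCentralSeries k = ⊥) :
    (⊤ : Subgroup G).lowerCentralSeries k ≤ f.ker := by
  rw [← map_eq_bot_iff, map_lowerCentralSeries, eq_bot_iff, ← hH]
  exact lowerCentralSeries_mono k le_top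

theorem commute_commutatorElement_of_quotient_lowerCentralSeries_two
    (x y z : G ⧸ (⊤ : Subgroup G).lowerCentralSeries 2) : Commute ⁅x, y⁆ z := by
  induction x using QuotientGroup.induction_on with | H a => ?_
  induction y using QuotientGroup.induction_on with | H b => ?_
  induction z using QuotientGroup.induction_on with | H c => ?_
  rw [← commutatorElement_eq_one_iff_commute, ← QuotientGroup.mk'_apply, ← QuotientGroup.mk'_apply,
    ← QuotientGroup.mk'_apply, ← map_commutatorElement, ← map_commutatorElement,
    QuotientGroup.mk'_apply, QuotientGroup.eq_one_iff]
  exact commutator_mem_commutator (commutator_mem_commutator (mem_top a) (mem_top b)) (mem_top c)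

end Subgroup

section

variable {G : Type*} [Group G]

theorem eq_of_braid_of_commute_commutatorElement {x y : G} (hc : Commute ⁅x, y⁆ y)
    (h : x * y * x = y * x * y) : x = y := by
  have hxy : x * y = ⁅x, y⁆ * (y * x) := by rw [commutatorElement_def]; group
  have hxx : ⁅x, y⁆ * (x * x) = ⁅x, y⁆ * (y * x) := by
    refine mul_left_cancel (a := y) ?_
    calc y * (⁅x, y⁆ * (x * x)) = ⁅x, y⁆ * (y * x) * x := by rw [← mul_assoc, ← hc.eq]; group
      _ = y * (x * y) := by rw [← hxy, h, mul_assoc]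
      _ = y * (⁅x, y⁆ * (y * x)) := by rw [hxy]
  exact mul_right_cancel (mul_left_cancel hxx)

theorem commutatorElement_eq_sq_iff_of_commute {a b s : G} (ha : Commute a s) (hb : Commute b s) :
    ⁅a, b⁆ = s ^ 2 ↔ a * s * b = s * b * s * a * s := by
  have hl : a * s * b = s * (a * b) := by rw [ha.eq, mul_assoc]
  have hr : s * b * s * a * s = s * (s ^ 2 * (b * a)) := by
    calc s * b * s * a * s = s * (b * s) * (a * s) := by group
      _ = s * (s * b) * (s * a) := by rw [hb.eq, ha.eq]
      _ = s * s * (b * s) * a := by group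
      _ = s * (s ^ 2 * (b * a)) := by rw [hb.eq, pow_two]; group
  rw [hl, hr, mul_right_inj, commutatorElement_def, mul_inv_eq_iff_eq_mul, mul_inv_eq_iff_eq_mul,
    mul_assoc]

theorem commute_iff_commute_conj_of_commute {x y s : G} (hy : Commute y s) :
    Commute x y ↔ x * s⁻¹ * y * s = s⁻¹ * y * s * x := by
  have hconj : s⁻¹ * y * s = y := by rw [mul_assoc, hy.eq, inv_mul_cancel_left]
  rw [show x * s⁻¹ * y * s = x * (s⁻¹ * y * s) by group, hconj]
  rfl

end

namespace GGroup

variable {g : ℕ}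

theorem commute_of_of {x y : GGGen g}
    (h : ∀ i : Fin g, ¬((x = .a i ∧ y = .b i) ∨ (x = .b i ∧ y = .a i))) :
    Commute (PresentedGroup.of (rels := GgRels g) x) (PresentedGroup.of y) := by
  have hr := PresentedGroup.one_of_mem (rels := GgRels g) (.inl ⟨x, y, h, rfl⟩)
  rwa [map_mul, map_mul, map_mul, map_inv, map_inv, ← commutatorElement_def,
    commutatorElement_eq_one_iff_commute] at hr

theorem commutatorElement_of_a_b (i : Fin g) :
    ⁅(PresentedGroup.of (.a i) : GGroup g), (PresentedGroup.of (.b i) : GGroup g)⁆ =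
      PresentedGroup.of .s ^ 2 := by
  have hr := PresentedGroup.one_of_mem (rels := GgRels g) (.inr ⟨i, rfl⟩)
  rwa [map_mul, map_inv, mul_inv_eq_one, map_mul, map_mul, map_mul, map_inv, map_inv, map_pow,
    ← commutatorElement_def] at hr

theorem of_s_mem_center : PresentedGroup.of (rels := GgRels g) .s ∈ Subgroup.center (GGroup g) := by
  refine Subgroup.mem_center_iff.mpr fun x => ?_
  have hx : x ∈ Subgroup.centralizer {PresentedGroup.of .s} :=
    PresentedGroup.generated_by _ _ (fun y => Subgroup.mem_centralizer_singleton_iff.mpr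
      (commute_of_of (x := .s) (y := y) (by simp)).symm.eq) x
  exact Subgroup.mem_centralizer_singleton_iff.mp hx

theorem commute_of_s (x : GGroup g) : Commute x (PresentedGroup.of .s) :=
  Subgroup.mem_center_iff.mp of_s_mem_center x

theorem lowerCentralSeries_two_eq_bot : (⊤ : Subgroup (GGroup g)).lowerCentralSeries 2 = ⊥ := by
  refine Subgroup.lowerCentralSeries_two_eq_bot_of_closure (PresentedGroup.closure_range_of _) ?_
  rintro _ ⟨x, rfl⟩ _ ⟨y, rfl⟩
  by_cases hxy : ∃ i, (x = .a i ∧ y = .b i) ∨ (x = .b i ∧ y = .a i)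
  · obtain ⟨i, ⟨rfl, rfl⟩ | ⟨rfl, rfl⟩⟩ := hxy
    · rw [commutatorElement_of_a_b]
      exact pow_mem of_s_mem_center 2
    · rw [← commutatorElement_inv, commutatorElement_of_a_b]
      exact inv_mem (pow_mem of_s_mem_center 2)
  · rw [commutatorElement_eq_one_iff_commute.mpr (commute_of_of (not_exists.mp hxy))]
    exact one_mem _

end GGroup

namespace SurfGen

variable {g n : ℕ}

def toGGroup : SurfGen g n → GGroup g
  | .a i => PresentedGroup.of (.a i)
  | .b i => PresentedGroup.of (.b i)
  | .s _ => PresentedGroup.of .s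

@[simp]
theorem toGGroup_s (j : Fin (n - 1)) : toGGroup (g := g) (.s j) = PresentedGroup.of .s := rfl

theorem commute_toGGroup_c_c {t t' : Bool} {i j : Fin g} (hij : i ≠ j) :
    Commute (toGGroup (n := n) (c t i)) (toGGroup (n := n) (c t' j)) := by
  cases t <;> cases t' <;> exact GGroup.commute_of_of (by simp [hij.symm])

theorem toGGroup_rels : ∀ r ∈ surfBraidRels g n, FreeGroup.lift toGGroup r = 1 := by
  rintro r (((((⟨i, j, -, rfl⟩ | ⟨i, j, -, rfl⟩) | ⟨t, i, j, -, rfl⟩) | ⟨t, i, h0, rfl⟩) |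
    ⟨i, h0, rfl⟩) | ⟨t, t', i, j, h0, hji, rfl⟩) <;>
    simp only [map_mul, map_inv, FreeGroup.lift_apply_of, mul_inv_eq_one, toGGroup_s]
  · exact GGroup.commute_of_s _
  · have hc := GGroup.commute_of_s (toGGroup (n := n) (c t i))
    rw [hc.eq, mul_assoc (_ * _), hc.eq]
    group
  · exact (commutatorElement_eq_sq_iff_of_commute (GGroup.commute_of_s _)
      (GGroup.commute_of_s _)).mp (GGroup.commutatorElement_of_a_b i)
  · exact (commute_iff_commute_conj_of_commute (GGroup.commute_of_s _)).mp
      (commute_toGGroup_c_c (Fin.ne_of_gt hji))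

end SurfGen

namespace SurfBraidGroup

variable {g n : ℕ}

def toGGroup : SurfBraidGroup g n →* GGroup g :=
  PresentedGroup.toGroup SurfGen.toGGroup_rels

/-- Mathlib indexes the lower central series from `0`, so `Γ_3` is `lowerCentralSeries 2`. -/
abbrev Quot3 (g n : ℕ) :=
  SurfBraidGroup g n ⧸ (⊤ : Subgroup (SurfBraidGroup g n)).lowerCentralSeries 2

namespace Quot3

abbrev gen (x : SurfGen g n) : Quot3 g n := QuotientGroup.mk (PresentedGroup.of x)

theorem lift_gen_eq_one {r : FreeGroup (SurfGen g n)} (hr : r ∈ surfBraidRels g n) :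
    FreeGroup.lift gen r = 1 := by
  rw [← FreeGroup.lift_unique (f := gen) ((QuotientGroup.mk' _).comp (PresentedGroup.mk _))
      fun _ => rfl,
    MonoidHom.comp_apply, PresentedGroup.one_of_mem hr, map_one]

theorem gen_s_eq_of_succ_eq {i j : Fin (n - 1)} (hij : (i : ℕ) + 1 = j) :
    gen (g := g) (.s i) = gen (.s j) := by
  have h := lift_gen_eq_one (g := g) (.inl <| .inl <| .inl <| .inl <| .inr ⟨i, j, hij, rfl⟩)
  simp only [map_mul, map_inv, FreeGroup.lift_apply_of, mul_inv_eq_one] at h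
  exact eq_of_braid_of_commute_commutatorElement
    (Subgroup.commute_commutatorElement_of_quotient_lowerCentralSeries_two _ _ _) h

theorem gen_s_eq (i j : Fin (n - 1)) : gen (g := g) (.s i) = gen (.s j) := by
  have h0 : 0 < n - 1 := i.pos
  suffices h : ∀ (m : ℕ) (hm : m < n - 1), gen (g := g) (.s ⟨m, hm⟩) = gen (.s ⟨0, h0⟩) by
    obtain ⟨i, hi⟩ := i
    obtain ⟨j, hj⟩ := j
    rw [h i hi, h j hj]
  intro m
  induction m with
  | zero => intro _; rfl
  | succ m ih => intro hm; rw [← gen_s_eq_of_succ_eq (i := ⟨m, by omega⟩) rfl, ih]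

/-- In the quotient `σ_j = σ_2`, which commutes with `c_i` by the presentation. -/
theorem commute_gen_c_s (hn : 3 ≤ n) (t : Bool) (i : Fin g) (j : Fin (n - 1)) :
    Commute (gen (.c t i)) (gen (.s j)) := by
  have h := lift_gen_eq_one (g := g) (n := n)
    (.inl <| .inl <| .inl <| .inr ⟨t, i, ⟨1, by omega⟩, le_rfl, rfl⟩)
  simp only [map_mul, map_inv, FreeGroup.lift_apply_of, mul_inv_eq_one] at h
  rwa [gen_s_eq _ j] at h

theorem commute_gen_c_c (hn : 3 ≤ n) (t t' : Bool) {i j : Fin g} (hij : i ≠ j) :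
    Commute (gen (n := n) (.c t i)) (gen (.c t' j)) := by
  wlog hji : (j : ℕ) < i generalizing t t' i j
  · exact (this t' t hij.symm (by omega)).symm
  have h := lift_gen_eq_one (g := g) (n := n) (.inr ⟨t, t', i, j, by omega, hji, rfl⟩)
  simp only [map_mul, map_inv, FreeGroup.lift_apply_of, mul_inv_eq_one] at h
  exact (commute_iff_commute_conj_of_commute (commute_gen_c_s hn t' j _)).mpr h

theorem commutatorElement_gen_a_b (hn : 3 ≤ n) (i : Fin g) (j : Fin (n - 1)) :
    ⁅(gen (.a i) : Quot3 g n), gen (.b i)⁆ = gen (.s j) ^ 2 := by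
  have h := lift_gen_eq_one (g := g) (n := n) (.inl <| .inr ⟨i, by omega, rfl⟩)
  simp only [map_mul, map_inv, FreeGroup.lift_apply_of, mul_inv_eq_one] at h
  rw [gen_s_eq j]
  exact (commutatorElement_eq_sq_iff_of_commute (commute_gen_c_s hn false i _)
    (commute_gen_c_s hn true i _)).mpr h

def toGGroup : Quot3 g n →* GGroup g :=
  QuotientGroup.lift _ SurfBraidGroup.toGGroup
    (Subgroup.lowerCentralSeries_le_ker _ GGroup.lowerCentralSeries_two_eq_bot)

@[simp]
theorem toGGroup_gen (x : SurfGen g n) : toGGroup (gen x) = x.toGGroup :=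
  PresentedGroup.toGroup.of SurfGen.toGGroup_rels

def ofGGGen (j : Fin (n - 1)) : GGGen g → Quot3 g n
  | .a i => gen (.a i)
  | .b i => gen (.b i)
  | .s => gen (.s j)

theorem ofGGGen_rels (hn : 3 ≤ n) (j : Fin (n - 1)) :
    ∀ r ∈ GgRels g, FreeGroup.lift (ofGGGen j) r = 1 := by
  rintro r (⟨x, y, hxy, rfl⟩ | ⟨i, rfl⟩)
  · simp only [map_mul, map_inv, FreeGroup.lift_apply_of]
    rw [← commutatorElement_def, commutatorElement_eq_one_iff_commute]
    rcases x with i | i | _ <;> rcases y with k | k | _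
    · rcases eq_or_ne i k with rfl | hik
      exacts [.refl _, commute_gen_c_c hn false false hik]
    · exact commute_gen_c_c hn false true (by rintro rfl; exact hxy i (.inl ⟨rfl, rfl⟩))
    · exact commute_gen_c_s hn false i j
    · exact commute_gen_c_c hn true false (by rintro rfl; exact hxy i (.inr ⟨rfl, rfl⟩))
    · rcases eq_or_ne i k with rfl | hik
      exacts [.refl _, commute_gen_c_c hn true true hik]
    · exact commute_gen_c_s hn true i j
    · exact (commute_gen_c_s hn false k j).symm
    · exact (commute_gen_c_s hn true k j).symm
    · exact .refl _
  · simp only [map_mul, map_inv, map_pow, FreeGroup.lift_apply_of, mul_inv_eq_one,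
      ← commutatorElement_def]
    exact commutatorElement_gen_a_b hn i j

def ofGGroup (hn : 3 ≤ n) : GGroup g →* Quot3 g n :=
  PresentedGroup.toGroup (ofGGGen_rels hn ⟨0, by omega⟩)

@[simp]
theorem ofGGroup_of (hn : 3 ≤ n) (x : GGGen g) :
    ofGGroup hn (PresentedGroup.of x) = ofGGGen ⟨0, by omega⟩ x :=
  PresentedGroup.toGroup.of _

theorem ofGGroup_comp_toGGroup (hn : 3 ≤ n) :
    (ofGGroup hn).comp toGGroup = MonoidHom.id (Quot3 g n) :=
  QuotientGroup.monoidHom_ext _ <| PresentedGroup.ext fun x => by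
    rcases x with i | i | j <;> simp only [MonoidHom.comp_apply, QuotientGroup.mk'_apply,
      MonoidHom.id_apply, toGGroup_gen, SurfGen.toGGroup, ofGGroup_of, ofGGGen]
    exact gen_s_eq _ j

theorem toGGroup_comp_ofGGroup (hn : 3 ≤ n) :
    toGGroup.comp (ofGGroup hn) = MonoidHom.id (GGroup g) :=
  PresentedGroup.ext fun x => by cases x <;> simp [ofGGGen, SurfGen.toGGroup]

def mulEquivGGroup (hn : 3 ≤ n) : Quot3 g n ≃* GGroup g :=
  toGGroup.toMulEquiv (ofGGroup hn) (ofGGroup_comp_toGGroup hn) (toGGroup_comp_ofGGroup hn)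

end Quot3

end SurfBraidGroup

theorem stmt7_general (g n : ℕ) (hn : 3 ≤ n) :
    ∃ φ : (SurfBraidGroup g n ⧸ (⊤ : Subgroup (SurfBraidGroup g n)).lowerCentralSeries 2) ≃* GGroup g,
      (∀ j : Fin (n - 1),
        φ (QuotientGroup.mk (PresentedGroup.of (SurfGen.s j))) = PresentedGroup.of GGGen.s) ∧
      (∀ i : Fin g,
        φ (QuotientGroup.mk (PresentedGroup.of (SurfGen.a i))) = PresentedGroup.of (GGGen.a i)) ∧
      (∀ i : Fin g,
        φ (QuotientGroup.mk (PresentedGroup.of (SurfGen.b i))) = PresentedGroup.of (GGGen.b i)) := by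
  open SurfBraidGroup.Quot3 in
  exact ⟨mulEquivGGroup hn, fun j => toGGroup_gen (.s j), fun i => toGGroup_gen (n := n) (.a i),
    fun i => toGGroup_gen (n := n) (.b i)⟩

theorem stmt7 (g n : ℕ) (hg : 1 ≤ g) (hn : 3 ≤ n) :
    ∃ φ : (SurfBraidGroup g n ⧸ (⊤ : Subgroup (SurfBraidGroup g n)).lowerCentralSeries 2) ≃* GGroup g,
      (∀ j : Fin (n - 1),
        φ (QuotientGroup.mk (PresentedGroup.of (SurfGen.s j))) = PresentedGroup.of GGGen.s) ∧
      (∀ i : Fin g,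
        φ (QuotientGroup.mk (PresentedGroup.of (SurfGen.a i))) = PresentedGroup.of (GGGen.a i)) ∧
      (∀ i : Fin g,
        φ (QuotientGroup.mk (PresentedGroup.of (SurfGen.b i))) = PresentedGroup.of (GGGen.b i)) :=
  stmt7_general g n hn
end

section
/- Let g ≥ 1 and let H be a group. Any group homomorphism φ : G_g → H such that φ(σ) has infinite order is injective. -/
open scoped commutatorElement

theorem commutatorElement_left_eq_of_closure_eq_top {G : Type*} [Group G] {S : Set G}
    (hS : Subgroup.closure S = ⊤) (y : G) (ψ : G →* Subgroup.center G)
    (h : ∀ s ∈ S, ⁅s, y⁆ = ψ s) (x : G) : ⁅x, y⁆ = ψ x := by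
  have hcentral (x z : G) : z * (ψ x : G) = ψ x * z := Subgroup.mem_center_iff.mp (ψ x).2 z
  induction hS.symm ▸ Subgroup.mem_top x using Subgroup.closure_induction with
  | mem s hs => exact h s hs
  | one => simp
  | mul x x' _ _ hx hx' =>
    rw [commutatorElement_mul_left_eq_conj_mul, hx, hx', hcentral x' x, mul_inv_cancel_right,
      map_mul, Subgroup.coe_mul, hcentral x']
  | inv x _ hx =>
    rw [commutatorElement_inv_left, ← commutatorElement_inv, hx, ← Subgroup.coe_inv, ← map_inv,
      hcentral, inv_mul_cancel_right]

abbrev QuotientGroup.commGroupOfCommutatorMem {G : Type*} [Group G] (N : Subgroup G) [N.Normal]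
    (h : ∀ x y : G, ⁅x, y⁆ ∈ N) : CommGroup (G ⧸ N) where
  mul_comm := by
    refine fun x y => QuotientGroup.induction_on x fun x => QuotientGroup.induction_on y fun y => ?_
    rw [← QuotientGroup.mk_mul, ← QuotientGroup.mk_mul, QuotientGroup.eq]
    -- `(x * y)⁻¹ * (y * x) = ⁅y⁻¹, x⁻¹⁆`
    simpa [commutatorElement_def, mul_assoc] using h y⁻¹ x⁻¹

namespace GGroup

variable {g : ℕ}

abbrev a (i : Fin g) : GGroup g := PresentedGroup.of (.a i)
abbrev b (i : Fin g) : GGroup g := PresentedGroup.of (.b i)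
abbrev σ : GGroup g := PresentedGroup.of .s

theorem commutatorElement_of_of {x y : GGGen g}
    (h : ∀ i, ¬((x = .a i ∧ y = .b i) ∨ (x = .b i ∧ y = .a i))) :
    ⁅(PresentedGroup.of x : GGroup g), (PresentedGroup.of y : GGroup g)⁆ = 1 :=
  PresentedGroup.one_of_mem (Or.inl ⟨x, y, h, rfl⟩)

theorem commutatorElement_a_b_self (i : Fin g) : ⁅a i, b i⁆ = σ ^ 2 :=
  mul_inv_eq_one.mp (PresentedGroup.one_of_mem (Or.inr ⟨i, rfl⟩))

theorem σ_mem_center : (σ : GGroup g) ∈ Subgroup.center (GGroup g) := by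
  refine Subgroup.mem_center_iff.2 fun y => Subgroup.mem_centralizer_singleton_iff.1 ?_
  refine PresentedGroup.generated_by _ (Subgroup.centralizer {σ}) (fun x => ?_) y
  rw [Subgroup.mem_centralizer_singleton_iff, ← commutatorElement_eq_one_iff_mul_comm]
  exact commutatorElement_of_of (by simp)

theorem lift_eq_one_of_mem_rels {M : Type*} [CommGroup M] {f : GGGen g → M} (hs : f .s = 1) :
    ∀ r ∈ GgRels g, FreeGroup.lift f r = 1 := by
  rintro r (⟨x, y, -, rfl⟩ | ⟨i, rfl⟩) <;> simp [hs]

def toCommGroup {M : Type*} [CommGroup M] (f : GGGen g → M) (hs : f .s = 1) : GGroup g →* M :=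
  PresentedGroup.toGroup (lift_eq_one_of_mem_rels hs)

@[simp]
theorem toCommGroup_of {M : Type*} [CommGroup M] (f : GGGen g → M) (hs : f .s = 1) (x : GGGen g) :
    toCommGroup f hs (PresentedGroup.of x) = f x :=
  PresentedGroup.toGroup.of _

def expSumA (j : Fin g) : GGroup g →* Multiplicative ℤ :=
  toCommGroup (fun | .a i => Multiplicative.ofAdd (if i = j then 1 else 0) | _ => 1) rfl

def expSumB (j : Fin g) : GGroup g →* Multiplicative ℤ :=
  toCommGroup (fun | .b i => Multiplicative.ofAdd (if i = j then 1 else 0) | _ => 1) rfl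

theorem commutatorElement_b_right (x : GGroup g) (j : Fin g) :
    ⁅x, b j⁆ = (σ ^ 2) ^ (expSumA j x).toAdd := by
  rw [commutatorElement_left_eq_of_closure_eq_top (PresentedGroup.closure_range_of _) (b j)
    ((zpowersHom _ ⟨σ ^ 2, pow_mem σ_mem_center 2⟩).comp (expSumA j)) ?_ x]
  · simp [zpowersHom_apply]
  rintro _ ⟨i | i | _, rfl⟩
  · by_cases h : i = j
    · subst h
      simpa [expSumA] using commutatorElement_a_b_self i
    · simpa [expSumA, h] using commutatorElement_of_of (by simp [Ne.symm h])
  all_goals simpa [expSumA] using commutatorElement_of_of (by simp)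

theorem commutatorElement_a_left (j : Fin g) (x : GGroup g) :
    ⁅a j, x⁆ = (σ ^ 2) ^ (expSumB j x).toAdd := by
  rw [← commutatorElement_inv, commutatorElement_left_eq_of_closure_eq_top
    (PresentedGroup.closure_range_of _) (a j)
    ((zpowersHom _ ⟨(σ ^ 2)⁻¹, inv_mem (pow_mem σ_mem_center 2)⟩).comp (expSumB j)) ?_ x]
  · simp [zpowersHom_apply]
  rintro _ ⟨i | i | _, rfl⟩
  · simpa [expSumB] using commutatorElement_of_of (by simp)
  · by_cases h : i = j
    · subst h
      simpa [expSumB, commutatorElement_inv] using congrArg (·⁻¹) (commutatorElement_a_b_self i)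
    · simpa [expSumB, h] using commutatorElement_of_of (by simp [Ne.symm h])
  · simpa [expSumB] using commutatorElement_of_of (by simp)

instance zpowers_σ_normal : (Subgroup.zpowers (σ : GGroup g)).Normal :=
  ⟨fun n hn x => by
    rwa [Subgroup.mem_center_iff.mp (Subgroup.zpowers_le.2 σ_mem_center hn) x,
      mul_inv_cancel_right]⟩

theorem commutatorElement_mem_zpowers_σ (x y : GGroup g) : ⁅x, y⁆ ∈ Subgroup.zpowers σ := by
  have hσ2 : (σ : GGroup g) ^ 2 ∈ Subgroup.zpowers σ := pow_mem (Subgroup.mem_zpowers σ) 2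
  suffices x ∈ Subgroup.upperCentralSeriesStep (Subgroup.zpowers σ) from this y
  refine PresentedGroup.generated_by _ _ (fun z y => ?_) x
  cases z with
  | a j => rw [commutatorElement_a_left]; exact zpow_mem hσ2 _
  | b j => rw [← commutatorElement_inv, commutatorElement_b_right]; exact inv_mem (zpow_mem hσ2 _)
  | s =>
    rw [commutatorElement_eq_one_iff_commute.2 (Subgroup.mem_center_iff.mp σ_mem_center y).symm]
    exact one_mem _

theorem mem_zpowers_σ_of_expSum_eq_one {x : GGroup g} (hA : ∀ j, expSumA j x = 1)
    (hB : ∀ j, expSumB j x = 1) : x ∈ Subgroup.zpowers σ := by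
  let _ := QuotientGroup.commGroupOfCommutatorMem (Subgroup.zpowers (σ : GGroup g))
    commutatorElement_mem_zpowers_σ
  let s : GGroup g →* GGroup g ⧸ Subgroup.zpowers σ :=
    ∏ j, ((zpowersHom _ (a j : GGroup g ⧸ _)).comp (expSumA j) *
      (zpowersHom _ (b j : GGroup g ⧸ _)).comp (expSumB j))
  have hs : s = QuotientGroup.mk' _ := by
    ext (i | i | _)
    · simp [s, expSumA, expSumB, zpowersHom_apply]
    · simp [s, expSumA, expSumB, zpowersHom_apply]
    · simpa [s, expSumA, expSumB, eq_comm] using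
        (QuotientGroup.eq_one_iff _).2 (Subgroup.mem_zpowers (σ : GGroup g))
  rw [← QuotientGroup.eq_one_iff, ← QuotientGroup.mk'_apply, ← hs]
  simp [s, hA, hB]

end GGroup

open GGroup in
theorem stmt15_general (g : ℕ) {H : Type*} [Group H] (φ : GGroup g →* H)
    (hσ : ¬ IsOfFinOrder (φ (PresentedGroup.of .s))) :
    Function.Injective φ := by
  have zpow_eq_zero {n : ℤ} (h : φ σ ^ n = 1) : n = 0 :=
    by_contra fun hn => hσ (isOfFinOrder_iff_zpow_eq_one.2 ⟨n, hn, h⟩)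
  have expSum_eq_one {y : GGroup g} {e : Multiplicative ℤ} (hy : y = (σ ^ 2) ^ e.toAdd)
      (h : φ y = 1) : e = 1 := by
    rw [hy, map_zpow, map_pow, ← zpow_natCast, ← zpow_mul] at h
    have := zpow_eq_zero h
    exact toAdd_eq_zero.1 (by omega)
  refine (injective_iff_map_eq_one φ).2 fun x hx => ?_
  have hA (j : Fin g) : expSumA j x = 1 :=
    expSum_eq_one (commutatorElement_b_right x j) (by simp [map_commutatorElement, hx])
  have hB (j : Fin g) : expSumB j x = 1 :=
    expSum_eq_one (commutatorElement_a_left j x) (by simp [map_commutatorElement, hx])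
  obtain ⟨m, rfl⟩ := Subgroup.mem_zpowers_iff.1 (mem_zpowers_σ_of_expSum_eq_one hA hB)
  rw [map_zpow] at hx
  rw [zpow_eq_zero hx, zpow_zero]

/-- Any homomorphism from `G_g` to a group under which `σ` has
infinite-order image is injective. -/
theorem stmt15 (g : ℕ) (hg : 1 ≤ g) {H : Type*} [Group H] (φ : GGroup g →* H)
    (hσ : ¬ IsOfFinOrder (φ (PresentedGroup.of .s))) :
    Function.Injective φ :=
  stmt15_general g φ hσ
end

section
/- Let g ≥ 1 and n ≥ 3, and write B = B_n(Σ_g). Let H be a group and λ : B → H a surjective group homomorphism such that the subgroup of H generated by λ(σ_1),…,λ(σ_{n−1}) is infinite cyclic (isomorphic to ℤ). Then there exists a group isomorphism ι : H → B/Γ_3(B) such that ι ∘ λ is the canonical projection B → B/Γ_3(B), i.e. ι ∘ λ sends every generator of B to its class in B/Γ_3(B). -/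
open scoped commutatorElement

open Subgroup

section CentralCommutators

variable {G : Type*} [Group G]

theorem eq_of_braid_of_commute_commutator {x y : G} (hxy : Commute ⁅y, x⁆ x)
    (h : x * y * x = y * x * y) : x = y := by
  have hyx : y * x = ⁅y, x⁆ * x * y := by group
  have hxyx : x * y * x = ⁅y, x⁆ * x * (x * y) := by
    rw [mul_assoc, hyx, ← mul_assoc, ← mul_assoc, ← hxy.eq]; group
  rw [hxyx, hyx, mul_assoc (⁅y, x⁆ * x)] at h
  exact mul_right_cancel (mul_left_cancel h)

theorem commutator_mem_center_of_closure_eq_top {X : Set G} (hX : closure X = ⊤)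
    (hXZ : ∀ x ∈ X, ∀ y ∈ X, ⁅x, y⁆ ∈ center G) (p q : G) : ⁅p, q⁆ ∈ center G := by
  set π := QuotientGroup.mk' (center G)
  have hcomm : ∀ a ∈ π '' X, ∀ b ∈ π '' X, a * b = b * a := by
    rintro _ ⟨x, hx, rfl⟩ _ ⟨y, hy, rfl⟩
    rw [← commutatorElement_eq_one_iff_mul_comm, ← map_commutatorElement]
    exact (QuotientGroup.eq_one_iff _).mpr (hXZ x hx y hy)
  have htop : closure (π '' X) = ⊤ := by
    rw [← MonoidHom.map_closure, hX, ← MonoidHom.range_eq_map,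
      MonoidHom.range_eq_top.mpr (QuotientGroup.mk'_surjective _)]
  have hcommTop := isMulCommutative_closure hcomm
  rw [htop] at hcommTop
  rw [← QuotientGroup.eq_one_iff, ← QuotientGroup.mk'_apply, map_commutatorElement,
    commutatorElement_eq_one_iff_mul_comm]
  exact setLike_mul_comm (mem_top (π p)) (mem_top (π q))

theorem lowerCentralSeries_two_eq_bot_of_commutator_mem_center
    (hZ : ∀ p q : G, ⁅p, q⁆ ∈ center G) : (⊤ : Subgroup G).lowerCentralSeries 2 = ⊥ :=
  Subgroup.lowerCentralSeries_succ_eq_bot ⊤ (commutator_le.mpr fun p _ q _ => hZ p q)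

theorem QuotientGroup.commutator_mem_center_lowerCentralSeries_two
    (p q : G ⧸ (⊤ : Subgroup G).lowerCentralSeries 2) : ⁅p, q⁆ ∈ center _ := by
  induction p using QuotientGroup.induction_on with | H u => ?_
  induction q using QuotientGroup.induction_on with | H v => ?_
  refine mem_center_iff.mpr fun r => ?_
  induction r using QuotientGroup.induction_on with | H w => ?_
  have h := (QuotientGroup.eq_one_iff (N := (⊤ : Subgroup G).lowerCentralSeries 2) _).mpr
    (commutator_mem_commutator (commutator_mem_commutator (mem_top u) (mem_top v)) (mem_top w))
  rw [← commutatorElement_eq_one_iff_mul_comm, ← commutatorElement_inv, inv_eq_one]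
  simpa only [commutatorElement_def, QuotientGroup.mk_mul, QuotientGroup.mk_inv] using h

variable (hZ : ∀ p q : G, ⁅p, q⁆ ∈ center G)

def commutatorHom (t : G) : G →* center G where
  toFun p := ⟨⁅p, t⁆, hZ p t⟩
  map_one' := by ext; simp
  map_mul' p q := by
    ext
    simp only [coe_mul, commutatorElement_mul_left_eq_conj_mul]
    rw [mem_center_iff.mp (hZ q t) p, mul_inv_cancel_right]
    exact (mem_center_iff.mp (hZ q t) _).symm

@[simp]
theorem coe_commutatorHom (t p : G) : (commutatorHom hZ t p : G) = ⁅p, t⁆ := rfl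

include hZ in
theorem commutatorElement_mul_left_of_mem_center (p q t : G) : ⁅p * q, t⁆ = ⁅p, t⁆ * ⁅q, t⁆ :=
  congrArg Subtype.val (map_mul (commutatorHom hZ t) p q)

include hZ in
theorem commutatorElement_zpow_left_of_mem_center (p t : G) (e : ℤ) : ⁅p ^ e, t⁆ = ⁅p, t⁆ ^ e :=
  congrArg Subtype.val (map_zpow (commutatorHom hZ t) p e)

end CentralCommutators

section PiZPowers

variable {G ι : Type*} [Group G] [Fintype ι] [DecidableEq ι]

def piZPowersHom (A : ι → G) (hA : ∀ i j, Commute (A i) (A j)) : (ι → Multiplicative ℤ) →* G :=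
  MonoidHom.noncommPiCoprod (fun i => zpowersHom G (A i)) fun i j _ x y => by
    simpa only [zpowersHom_apply] using (hA i j).zpow_zpow x.toAdd y.toAdd

variable (A : ι → G) (hA : ∀ i j, Commute (A i) (A j))

theorem piZPowersHom_mulSingle (i : ι) (x : Multiplicative ℤ) :
    piZPowersHom A hA (Pi.mulSingle i x) = A i ^ x.toAdd :=
  (MonoidHom.noncommPiCoprod_mulSingle (fun i => zpowersHom G (A i)) i x).trans
    (zpowersHom_apply _ _ _)

open scoped IsMulCommutative in
theorem commutator_piZPowersHom (hZ : ∀ p q : G, ⁅p, q⁆ ∈ center G) (t : G) (j : ι)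
    (ht : ∀ i, i ≠ j → ⁅A i, t⁆ = 1) (x : ι → Multiplicative ℤ) :
    ⁅piZPowersHom A hA x, t⁆ = ⁅A j, t⁆ ^ (x j).toAdd := by
  suffices (commutatorHom hZ t).comp (piZPowersHom A hA) =
      (zpowersHom _ (commutatorHom hZ t (A j))).comp (Pi.evalMonoidHom _ j) by
    simpa using congrArg Subtype.val (DFunLike.congr_fun this x)
  refine MonoidHom.functions_ext (center G) _ _ fun i y => ?_
  by_cases hij : i = j
  · subst hij
    simp [piZPowersHom_mulSingle]
  · have h1 : commutatorHom hZ t (A i) = 1 := Subtype.ext (ht i hij)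
    simp [piZPowersHom_mulSingle, h1, Pi.mulSingle_eq_of_ne' hij]

end PiZPowers

/-- The relations satisfied by the images of the `a_i`, `b_i` once every `σ_j` is sent to one
element `s`; the square comes from `a_i σ_1 b_i = σ_1 b_i σ_1 a_i σ_1`. -/
structure HeisenbergRelations {G ι : Type*} [Group G] (s : G) (A B : ι → G) : Prop where
  commute_s_A : ∀ i, Commute s (A i)
  commute_s_B : ∀ i, Commute s (B i)
  commute_A : ∀ i j, Commute (A i) (A j)
  commute_B : ∀ i j, Commute (B i) (B j)
  commute_A_B : ∀ i j, i ≠ j → Commute (A i) (B j)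
  commutator_A_B : ∀ i, ⁅A i, B i⁆ = s ^ 2

namespace HeisenbergRelations

variable {G ι : Type*} [Group G] {s : G} {A B : ι → G} (h : HeisenbergRelations s A B)
include h

theorem commute_s {y : G} (hy : y ∈ insert s (Set.range A ∪ Set.range B)) : Commute s y := by
  rcases hy with hy | ⟨i, rfl⟩ | ⟨i, rfl⟩
  exacts [hy ▸ Commute.refl s, h.commute_s_A i, h.commute_s_B i]

theorem commutator_mem_zpowers {x y : G} (hx : x ∈ insert s (Set.range A ∪ Set.range B))
    (hy : y ∈ insert s (Set.range A ∪ Set.range B)) : ⁅x, y⁆ ∈ zpowers s := by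
  have of_commute {x y : G} (hxy : Commute x y) : ⁅x, y⁆ ∈ zpowers s := by
    rw [hxy.commutator_eq]; exact one_mem _
  rcases hx with hx | ⟨i, rfl⟩ | ⟨i, rfl⟩
  · subst x
    exact of_commute (h.commute_s hy)
  · rcases hy with hy | ⟨j, rfl⟩ | ⟨j, rfl⟩
    · subst y
      exact of_commute (h.commute_s_A i).symm
    · exact of_commute (h.commute_A i j)
    · obtain rfl | hij := eq_or_ne i j
      · rw [h.commutator_A_B]; exact pow_mem (mem_zpowers s) 2
      · exact of_commute (h.commute_A_B i j hij)
  · rcases hy with hy | ⟨j, rfl⟩ | ⟨j, rfl⟩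
    · subst y
      exact of_commute (h.commute_s_B i).symm
    · obtain rfl | hij := eq_or_ne i j
      · rw [← commutatorElement_inv, h.commutator_A_B]; exact inv_mem (pow_mem (mem_zpowers s) 2)
      · exact of_commute (h.commute_A_B j i hij.symm).symm
    · exact of_commute (h.commute_B i j)

variable (hgen : closure (insert s (Set.range A ∪ Set.range B)) = ⊤)
include hgen

theorem mem_center : s ∈ center G := by
  rw [← Subgroup.centralizer_univ, ← coe_top, ← hgen, centralizer_closure]
  exact mem_centralizer_iff.mpr fun y hy => (h.commute_s hy).symm.eq

theorem commutator_mem_center (p q : G) : ⁅p, q⁆ ∈ center G :=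
  commutator_mem_center_of_closure_eq_top hgen
    (fun _ hx _ hy => zpowers_le.mpr (h.mem_center hgen) (h.commutator_mem_zpowers hx hy)) p q

variable [Fintype ι] [DecidableEq ι]

theorem commutator_piZPowersHom_B_zpow_mem_zpowers (y : ι → Multiplicative ℤ) (j : ι) (e : ℤ) :
    ⁅piZPowersHom B h.commute_B y, A j ^ e⁆ ∈ zpowers s := by
  have hZ := h.commutator_mem_center hgen
  rw [commutator_piZPowersHom B h.commute_B hZ (A j ^ e) j
    (fun i hij => ((h.commute_A_B j i hij.symm).symm.zpow_right e).commutator_eq),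
    ← commutatorElement_inv, commutatorElement_zpow_left_of_mem_center hZ, h.commutator_A_B]
  exact zpow_mem (inv_mem (zpow_mem (pow_mem (mem_zpowers s) 2) e)) _

theorem exists_eq_zpow_mul (q : G) : ∃ (k : ℤ) (x y : ι → Multiplicative ℤ),
    q = s ^ k * piZPowersHom A h.commute_A x * piZPowersHom B h.commute_B y := by
  set P : G → Prop := fun q => ∃ (k : ℤ) (x y : ι → Multiplicative ℤ),
    q = s ^ k * piZPowersHom A h.commute_A x * piZPowersHom B h.commute_B y
  have step (q t : G) (ht : t ∈ insert s (Set.range A ∪ Set.range B)) (e : ℤ) (hq : P q) :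
      P (q * t ^ e) := by
    obtain ⟨k, x, y, rfl⟩ := hq
    set a := piZPowersHom A h.commute_A x
    set b := piZPowersHom B h.commute_B y
    rcases ht with ht | ⟨j, rfl⟩ | ⟨j, rfl⟩
    · subst t
      refine ⟨k + e, x, y, ?_⟩
      calc _ = s ^ k * (a * b * s ^ e) := by group
        _ = s ^ k * (s ^ e * (a * b)) := by
          rw [mem_center_iff.mp (zpow_mem (h.mem_center hgen) e)]
        _ = s ^ (k + e) * a * b := by group
    · obtain ⟨m, hm⟩ :=
        mem_zpowers_iff.mp (h.commutator_piZPowersHom_B_zpow_mem_zpowers hgen y j e)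
      change s ^ m = ⁅b, A j ^ e⁆ at hm
      refine ⟨k + m, x * Pi.mulSingle j (.ofAdd e), y, ?_⟩
      rw [map_mul, piZPowersHom_mulSingle, toAdd_ofAdd]
      calc _ = s ^ k * (a * s ^ m) * A j ^ e * b := by
            rw [hm, commutatorElement_def]; group
        _ = s ^ (k + m) * (a * A j ^ e) * b := by
          rw [mem_center_iff.mp (zpow_mem (h.mem_center hgen) m), zpow_add]; group
    · refine ⟨k, x, y * Pi.mulSingle j (.ofAdd e), ?_⟩
      rw [map_mul, piZPowersHom_mulSingle, toAdd_ofAdd, mul_assoc]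
  have hq : q ∈ closure (insert s (Set.range A ∪ Set.range B)) := hgen ▸ mem_top q
  induction hq using closure_induction_right with
  | one => exact ⟨0, 1, 1, by simp⟩
  | mul_right q _ t ht hq => simpa only [zpow_one] using step q t ht 1 hq
  | mul_inv_cancel q _ t ht hq => simpa only [zpow_neg_one] using step q t ht (-1) hq

theorem commutator_zpow_mul_B (k : ℤ) (x y : ι → Multiplicative ℤ) (j : ι) :
    ⁅s ^ k * piZPowersHom A h.commute_A x * piZPowersHom B h.commute_B y, B j⁆ =
      (s ^ 2) ^ (x j).toAdd := by
  have hZ := h.commutator_mem_center hgen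
  rw [commutatorElement_mul_left_of_mem_center hZ, commutatorElement_mul_left_of_mem_center hZ,
    ((h.commute_s_B j).zpow_left k).commutator_eq,
    commutator_piZPowersHom A h.commute_A hZ (B j) j
      (fun i hij => (h.commute_A_B i j hij).commutator_eq),
    commutator_piZPowersHom B h.commute_B hZ (B j) j
      (fun i _ => (h.commute_B i j).commutator_eq), h.commutator_A_B, commutatorElement_self]
  group

theorem commutator_zpow_mul_A (k : ℤ) (x y : ι → Multiplicative ℤ) (j : ι) :
    ⁅s ^ k * piZPowersHom A h.commute_A x * piZPowersHom B h.commute_B y, A j⁆ =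
      (s ^ 2) ^ (-(y j).toAdd) := by
  have hZ := h.commutator_mem_center hgen
  rw [commutatorElement_mul_left_of_mem_center hZ, commutatorElement_mul_left_of_mem_center hZ,
    ((h.commute_s_A j).zpow_left k).commutator_eq,
    commutator_piZPowersHom A h.commute_A hZ (A j) j
      (fun i _ => (h.commute_A i j).commutator_eq),
    commutator_piZPowersHom B h.commute_B hZ (A j) j
      (fun i hij => (h.commute_A_B j i hij.symm).symm.commutator_eq),
    commutatorElement_self, ← commutatorElement_inv, h.commutator_A_B]
  group

theorem injective_of_not_isOfFinOrder {K : Type*} [Group K] (φ : G →* K)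
    (hφ : ¬IsOfFinOrder (φ s)) : Function.Injective φ := by
  have hpow (m : ℤ) (hm : φ s ^ m = 1) : m = 0 := by
    by_contra hm0
    exact hφ (isOfFinOrder_iff_zpow_eq_one.mpr ⟨m, hm0, hm⟩)
  refine (injective_iff_map_eq_one φ).mpr fun q hq => ?_
  obtain ⟨k, x, y, rfl⟩ := h.exists_eq_zpow_mul hgen q
  have hcomm (t : G) : φ ⁅s ^ k * piZPowersHom A h.commute_A x * piZPowersHom B h.commute_B y, t⁆
      = 1 := by
    rw [map_commutatorElement, hq, commutatorElement_one_left]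
  have hx : x = 1 := funext fun j => by
    have := hcomm (B j)
    rw [h.commutator_zpow_mul_B hgen, map_zpow, map_pow, ← zpow_natCast, ← zpow_mul] at this
    simpa using hpow _ this
  have hy : y = 1 := funext fun j => by
    have := hcomm (A j)
    rw [h.commutator_zpow_mul_A hgen, map_zpow, map_pow, ← zpow_natCast, ← zpow_mul] at this
    simpa using hpow _ this
  subst hx hy
  rw [map_one, map_one, mul_one, mul_one] at hq ⊢
  rw [hpow k (by rwa [map_zpow] at hq), zpow_zero]

end HeisenbergRelations

theorem apply_eq_apply_of_forall_apply_eq_succ {α : Type*} {m : ℕ} (F : Fin m → α)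
    (h : ∀ (k : ℕ) (hk : k + 1 < m), F ⟨k, by omega⟩ = F ⟨k + 1, hk⟩) (i j : Fin m) :
    F i = F j := by
  have key (k : ℕ) (hk : k < m) : F ⟨k, hk⟩ = F ⟨0, by omega⟩ := by
    induction k with
    | zero => rfl
    | succ k ih => rw [← h k hk, ih]
  exact (key i i.2).trans (key j j.2).symm

namespace SurfBraidGroup

variable {g n : ℕ} {G : Type*} [Group G] (f : SurfBraidGroup g n →* G)

theorem map_mk_of_mem_rels {r : FreeGroup (SurfGen g n)} (hr : r ∈ surfBraidRels g n) :
    f (PresentedGroup.mk _ r) = 1 := by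
  rw [PresentedGroup.one_of_mem hr, map_one]

theorem map_s_braid (i j : Fin (n - 1)) (hij : (i : ℕ) + 1 = j) :
    f (.of (.s i)) * f (.of (.s j)) * f (.of (.s i)) =
      f (.of (.s j)) * f (.of (.s i)) * f (.of (.s j)) := by
  have h := map_mk_of_mem_rels f (.inl (.inl (.inl (.inl (.inr ⟨i, j, hij, rfl⟩)))))
  simp only [map_mul, map_inv] at h
  exact mul_inv_eq_one.mp h

theorem commute_map_c_map_s (t : Bool) (i : Fin g) (j : Fin (n - 1)) (hj : 1 ≤ (j : ℕ)) :
    Commute (f (.of (.c t i))) (f (.of (.s j))) := by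
  have h := map_mk_of_mem_rels f (.inl (.inl (.inl (.inr ⟨t, i, j, hj, rfl⟩))))
  simp only [map_mul, map_inv] at h
  exact mul_inv_eq_one.mp h

theorem map_a_s_b (i : Fin g) (h0 : 0 < n - 1) :
    f (.of (.a i)) * f (.of (.s ⟨0, h0⟩)) * f (.of (.b i)) =
      f (.of (.s ⟨0, h0⟩)) * f (.of (.b i)) * f (.of (.s ⟨0, h0⟩)) * f (.of (.a i)) *
        f (.of (.s ⟨0, h0⟩)) := by
  have h := map_mk_of_mem_rels f (.inl (.inr ⟨i, h0, rfl⟩))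
  simp only [map_mul, map_inv] at h
  exact mul_inv_eq_one.mp h

theorem map_c_s_inv_c_s (t t' : Bool) (i j : Fin g) (h0 : 0 < n - 1) (hji : (j : ℕ) < i) :
    f (.of (.c t i)) * (f (.of (.s ⟨0, h0⟩)))⁻¹ * f (.of (.c t' j)) * f (.of (.s ⟨0, h0⟩)) =
      (f (.of (.s ⟨0, h0⟩)))⁻¹ * f (.of (.c t' j)) * f (.of (.s ⟨0, h0⟩)) *
        f (.of (.c t i)) := by
  have h := map_mk_of_mem_rels f (.inr ⟨t, t', i, j, h0, hji, rfl⟩)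
  simp only [map_mul, map_inv] at h
  exact mul_inv_eq_one.mp h

theorem map_s_eq_map_s
    (hf : ∀ i j : Fin (n - 1), Commute ⁅f (.of (.s i)), f (.of (.s j))⁆ (f (.of (.s j))))
    (i j : Fin (n - 1)) : f (.of (.s i)) = f (.of (.s j)) :=
  apply_eq_apply_of_forall_apply_eq_succ (fun j => f (.of (.s j)))
    (fun _ _ => eq_of_braid_of_commute_commutator (hf _ _) (map_s_braid f _ _ rfl)) i j

section Collapsed

variable {s : G} (hs : ∀ j, f (.of (.s j)) = s)
include hs

theorem heisenbergRelations (h1 : 1 < n - 1) :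
    HeisenbergRelations s (fun i => f (.of (.a i))) (fun i => f (.of (.b i))) := by
  have h0 : 0 < n - 1 := by omega
  have hsc (t : Bool) (i : Fin g) : Commute s (f (.of (.c t i))) :=
    hs ⟨1, h1⟩ ▸ (commute_map_c_map_s f t i ⟨1, h1⟩ le_rfl).symm
  have hcc (t t' : Bool) (i j : Fin g) (hij : i ≠ j) :
      Commute (f (.of (.c t i))) (f (.of (.c t' j))) := by
    wlog hji : (j : ℕ) < i generalizing t t' i j
    · exact (this t' t j i hij.symm (by omega)).symm
    have h := map_c_s_inv_c_s f t t' i j h0 hji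
    rw [hs, mul_assoc (_ * _), mul_assoc, ← (hsc t' j).eq, inv_mul_cancel_left,
      mul_assoc s⁻¹, ← (hsc t' j).eq, inv_mul_cancel_left] at h
    exact h
  refine ⟨hsc false, hsc true, fun i j => ?_, fun i j => ?_, hcc false true, fun i => ?_⟩
  · obtain rfl | hij := eq_or_ne i j
    exacts [Commute.refl _, hcc false false i j hij]
  · obtain rfl | hij := eq_or_ne i j
    exacts [Commute.refl _, hcc true true i j hij]
  · have h := map_a_s_b f i h0
    rw [hs] at h
    set a := f (.of (.a i))
    set b := f (.of (.b i))
    have has : Commute a s := (hsc false i).symm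
    have hbs : Commute b s := (hsc true i).symm
    have key : s * (a * b) = s * (s ^ 2 * (b * a)) :=
      calc s * (a * b) = a * s * b := by rw [← mul_assoc, has.eq]
        _ = s * b * s * a * s := h
        _ = s * (s ^ 2 * (b * a)) := by
          simp only [mul_assoc, has.eq, hbs.eq, hbs.left_comm, sq]
    rw [commutatorElement_def, mul_left_cancel key]
    group

variable {f} (hf : Function.Surjective f)
include hf

theorem closure_eq_top :
    Subgroup.closure (insert s (Set.range (fun i => f (.of (.a i))) ∪
      Set.range (fun i => f (.of (.b i))))) = ⊤ := by
  rw [eq_top_iff, ← Subgroup.map_top_of_surjective f hf, ← PresentedGroup.closure_range_of,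
    MonoidHom.map_closure]
  refine Subgroup.closure_mono ?_
  rintro _ ⟨_, ⟨u, rfl⟩, rfl⟩
  cases u with
  | a i => exact .inr (.inl ⟨i, rfl⟩)
  | b i => exact .inr (.inr ⟨i, rfl⟩)
  | s j => exact .inl (hs j)

theorem lowerCentralSeries_two_le_ker (h1 : 1 < n - 1) :
    (⊤ : Subgroup (SurfBraidGroup g n)).lowerCentralSeries 2 ≤ f.ker := by
  have hZ := (heisenbergRelations f hs h1).commutator_mem_center (closure_eq_top hs hf)
  rw [← MonoidHom.comap_bot, ← Subgroup.map_le_iff_le_comap, Subgroup.map_lowerCentralSeries,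
    Subgroup.map_top_of_surjective f hf, lowerCentralSeries_two_eq_bot_of_commutator_mem_center hZ]

end Collapsed

end SurfBraidGroup

section CyclicSubgroup

variable {G : Type*} [Group G]

theorem Subgroup.commute_of_mulEquiv {K : Subgroup G} {M : Type*} [CommGroup M] (e : K ≃* M)
    {x y : G} (hx : x ∈ K) (hy : y ∈ K) : Commute x y := by
  have : (⟨x, hx⟩ * ⟨y, hy⟩ : K) = ⟨y, hy⟩ * ⟨x, hx⟩ :=
    e.injective (by rw [map_mul, map_mul, mul_comm])
  exact congrArg Subtype.val this

theorem not_isOfFinOrder_of_zpowers_mulEquiv {x : G} (e : zpowers x ≃* Multiplicative ℤ) :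
    ¬IsOfFinOrder x :=
  infinite_zpowers.mp (Set.infinite_coe_iff.mp (e.toEquiv.infinite_iff.mpr inferInstance))

end CyclicSubgroup

open SurfBraidGroup in
theorem stmt17_general (g n : ℕ) (hn : 3 ≤ n) {H : Type*} [Group H]
    (lam : SurfBraidGroup g n →* H) (hsurj : Function.Surjective lam)
    (hcyc : Nonempty (↥(Subgroup.closure
        (Set.range fun j : Fin (n - 1) => lam (PresentedGroup.of (SurfGen.s j)))) ≃*
      Multiplicative ℤ)) :
    ∃ ι : H ≃* (SurfBraidGroup g n ⧸ Subgroup.lowerCentralSeries (⊤ : Subgroup (SurfBraidGroup g n)) 2),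
      ι.toMonoidHom.comp lam =
        QuotientGroup.mk' (Subgroup.lowerCentralSeries (⊤ : Subgroup (SurfBraidGroup g n)) 2) := by
  obtain ⟨e⟩ := hcyc
  have h1 : 1 < n - 1 := by omega
  set σ₀ : Fin (n - 1) := ⟨0, by omega⟩
  set Γ₃ := (⊤ : Subgroup (SurfBraidGroup g n)).lowerCentralSeries 2
  have hσH (j) : lam (.of (.s j)) = lam (.of (.s σ₀)) := by
    refine map_s_eq_map_s lam (fun i j => ?_) j σ₀
    rw [(Subgroup.commute_of_mulEquiv e (subset_closure ⟨i, rfl⟩)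
      (subset_closure ⟨j, rfl⟩)).commutator_eq]
    exact Commute.one_left _
  have hσQ (j) : QuotientGroup.mk' Γ₃ (.of (.s j)) = QuotientGroup.mk' Γ₃ (.of (.s σ₀)) :=
    map_s_eq_map_s _ (fun _ _ => (mem_center_iff.mp
      (QuotientGroup.commutator_mem_center_lowerCentralSeries_two _ _) _).symm) j σ₀
  have hΓ₃ : Γ₃ ≤ lam.ker := lowerCentralSeries_two_le_ker hσH hsurj h1
  have hinf : ¬IsOfFinOrder (lam (.of (.s σ₀))) := by
    refine not_isOfFinOrder_of_zpowers_mulEquiv ((MulEquiv.subgroupCongr ?_).trans e)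
    have : Nonempty (Fin (n - 1)) := ⟨σ₀⟩
    rw [zpowers_eq_closure, ← Set.range_const (ι := Fin (n - 1))]
    exact congrArg _ (congrArg _ (funext hσH)).symm
  set lamBar := QuotientGroup.lift Γ₃ lam hΓ₃
  have hbij : Function.Bijective lamBar :=
    ⟨(heisenbergRelations _ hσQ h1).injective_of_not_isOfFinOrder
      (closure_eq_top hσQ (QuotientGroup.mk'_surjective Γ₃)) lamBar hinf,
      QuotientGroup.lift_surjective_of_surjective _ lam hsurj hΓ₃⟩
  exact ⟨(MulEquiv.ofBijective lamBar hbij).symm,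
    MonoidHom.ext fun w => (MulEquiv.symm_apply_eq (MulEquiv.ofBijective lamBar hbij)).mpr rfl⟩

/-- Any surjection `λ : B_n(Σ_g) → H` under which the images of the
`σ_i` generate an infinite cyclic subgroup is, up to an isomorphism `H ≅ B/Γ₃(B)`,
the canonical projection onto `B/Γ₃(B)`. -/
theorem stmt17 (g n : ℕ) (hg : 1 ≤ g) (hn : 3 ≤ n) {H : Type*} [Group H]
    (lam : SurfBraidGroup g n →* H) (hsurj : Function.Surjective lam)
    (hcyc : Nonempty (↥(Subgroup.closure
        (Set.range fun j : Fin (n - 1) => lam (PresentedGroup.of (SurfGen.s j)))) ≃*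
      Multiplicative ℤ)) :
    ∃ ι : H ≃* (SurfBraidGroup g n ⧸ Subgroup.lowerCentralSeries (⊤ : Subgroup (SurfBraidGroup g n)) 2),
      ι.toMonoidHom.comp lam =
        QuotientGroup.mk' (Subgroup.lowerCentralSeries (⊤ : Subgroup (SurfBraidGroup g n)) 2) :=
  stmt17_general g n hn lam hsurj hcyc
end
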